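/- arXiv:1710.00135 — 5 statements merged into one kernel-verified Lean document; each statement's English description precedes it below -/
import Mathlib

section
/- Let n ≥ 1 and let F : ℝⁿ → ℝ be a Minkowski norm, i.e. F is continuous, F(y) > 0 for every y ≠ 0, F(s·y) = s·F(y) for all s ≥ 0 and y ∈ ℝⁿ, and F² is twice continuously differentiable on ℝⁿ∖{0}. For z ≠ 0 define the fundamental form g_z(v,w) := (1/2)·D²(F²)(z)(v,w) (one half the second Fréchet derivative of F² at z), and set g_0(v,w) := 0. Suppose Λ ≥ 1 is a real number such that F(v)²/Λ ≤ g_z(v,v) ≤ Λ·F(v)² for every z ≠ 0 and every v ∈ ℝⁿ. Then for all ξ, η ∈ ℝⁿ: F(ξ+η)² ≥ F(ξ)² + 2·g_ξ(ξ,η) + F(η)²/Λ. -/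
/-!
Write `f = F²`. Along the segment `t ↦ ξ + t η` the function `φ(t) = f(ξ + t η)` has
`φ'' = 2 g_{ξ+tη}(η, η) ≥ 2 F(η)² / Λ`, so `φ(t) - t² F(η)² / Λ` is convex and lies above its
tangent line at `0`; differentiating Euler's identity `Df(y) y = 2 f(y)` turns `φ'(0) = Df(ξ) η`
into `2 g_ξ(ξ, η)`. If the segment meets the origin, where `f` need not be `C²`, then `ξ = -t η`
and homogeneity makes everything explicit: the claim reduces to `F(±η)² ≥ F(η)² / Λ`, which is
the uniformity bound at the points `±η`.
-/

open Set Filter Topology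

theorem quadratic_lower_bound_of_two_mul_le_deriv2 {φ φ' φ'' : ℝ → ℝ} {a b K : ℝ} (hab : a < b)
    (hφ : ∀ t ∈ Icc a b, HasDerivAt φ (φ' t) t) (hφ' : ∀ t ∈ Icc a b, HasDerivAt φ' (φ'' t) t)
    (hK : ∀ t ∈ Icc a b, 2 * K ≤ φ'' t) :
    φ a + φ' a * (b - a) + K * (b - a) ^ 2 ≤ φ b := by
  have hψ : ∀ t ∈ Icc a b, HasDerivAt (fun t => φ t - K * t ^ 2) (φ' t - 2 * K * t) t :=
    fun t ht => ((hφ t ht).sub ((hasDerivAt_pow 2 t).const_mul K)).congr_deriv (by norm_num; ring)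
  have hψ' : ∀ t ∈ Icc a b, HasDerivAt (fun t => φ' t - 2 * K * t) (φ'' t - 2 * K) t :=
    fun t ht => ((hφ' t ht).sub ((hasDerivAt_id t).const_mul (2 * K))).congr_deriv (by simp)
  have hconvex : ConvexOn ℝ (Icc a b) (fun t => φ t - K * t ^ 2) :=
    convexOn_of_hasDerivWithinAt2_nonneg (convex_Icc a b)
      (fun t ht => (hψ t ht).continuousAt.continuousWithinAt)
      (fun t ht => (hψ t (interior_subset ht)).hasDerivWithinAt)
      (fun t ht => (hψ' t (interior_subset ht)).hasDerivWithinAt)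
      (fun t ht => by linarith [hK t (interior_subset ht)])
  have hslope := hconvex.le_slope_of_hasDerivAt (left_mem_Icc.2 hab.le) (right_mem_Icc.2 hab.le)
    hab (hψ a (left_mem_Icc.2 hab.le))
  rw [slope_def_field, le_div_iff₀ (sub_pos.2 hab)] at hslope
  nlinarith

section

variable {E : Type*} [NormedAddCommGroup E] [NormedSpace ℝ E] {f : E → ℝ}

theorem fderiv_apply_self_of_homogeneous {z : E} (k : ℕ) (hf : DifferentiableAt ℝ f z)
    (hhom : ∀ s : ℝ, 0 < s → f (s • z) = s ^ k * f z) :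
    fderiv ℝ f z z = k * f z := by
  have hray : HasDerivAt (fun s : ℝ => f (s • z)) (fderiv ℝ f z z) 1 := by
    have hsmul : HasDerivAt (fun s : ℝ => s • z) z 1 := by
      simpa using (hasDerivAt_id (1 : ℝ)).smul_const z
    exact hf.hasFDerivAt.comp_hasDerivAt_of_eq 1 hsmul (one_smul ℝ z).symm
  have hpow : HasDerivAt (fun s : ℝ => s ^ k * f z) (k * f z) 1 := by
    simpa using (hasDerivAt_pow k (1 : ℝ)).mul_const (f z)
  refine hray.unique (hpow.congr_of_eventuallyEq ?_)
  filter_upwards [Ioi_mem_nhds one_pos] with s hs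
  exact hhom s hs

theorem fderiv_fderiv_apply_self_of_euler {z : E} (c : ℝ) (hf : DifferentiableAt ℝ f z)
    (hf' : DifferentiableAt ℝ (fderiv ℝ f) z)
    (heuler : ∀ᶠ y in 𝓝 z, fderiv ℝ f y y = c * f y) (w : E) :
    fderiv ℝ (fun y => fderiv ℝ f y z) z w = (c - 1) * fderiv ℝ f z w := by
  have hdiag : HasFDerivAt (fun y => fderiv ℝ f y y)
      ((fderiv ℝ f z).comp (ContinuousLinearMap.id ℝ E) + (fderiv ℝ (fderiv ℝ f) z).flip z) z :=
    hf'.hasFDerivAt.clm_apply (hasFDerivAt_id z)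
  have hscaled : HasFDerivAt (fun y => fderiv ℝ f y y) (c • fderiv ℝ f z) z :=
    (hf.hasFDerivAt.const_mul c).congr_of_eventuallyEq heuler
  have hw := congrArg (· w) (hdiag.unique hscaled)
  rw [fderiv_clm_apply hf' (differentiableAt_const z)]
  simp only [add_apply, ContinuousLinearMap.coe_comp, Function.comp_apply,
    ContinuousLinearMap.coe_id', id_eq, ContinuousLinearMap.flip_apply, smul_apply, smul_eq_mul,
    fderiv_const_apply, zero_apply, map_zero, zero_add] at hw ⊢
  linarith

theorem fderiv_fderiv_apply_neg (z v : E) :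
    fderiv ℝ (fun y => fderiv ℝ f y (-v)) z (-v) = fderiv ℝ (fun y => fderiv ℝ f y v) z v := by
  simp only [map_neg, fderiv_fun_neg, neg_apply, neg_neg]

theorem ContDiffOn.differentiableAt_fderiv {U : Set E} (hf : ContDiffOn ℝ 2 f U) (hU : IsOpen U)
    {z : E} (hz : z ∈ U) : DifferentiableAt ℝ (fderiv ℝ f) z :=
  ((hf.fderiv_of_isOpen hU (m := 1) le_rfl).differentiableOn one_ne_zero).differentiableAt
    (hU.mem_nhds hz)

theorem quadratic_lower_bound_along_segment {U : Set E} (hU : IsOpen U) (hf : ContDiffOn ℝ 2 f U)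
    {ξ η : E} (hseg : ∀ t ∈ Icc (0 : ℝ) 1, ξ + t • η ∈ U) {K : ℝ}
    (hK : ∀ t ∈ Icc (0 : ℝ) 1, 2 * K ≤ fderiv ℝ (fun y => fderiv ℝ f y η) (ξ + t • η) η) :
    f ξ + fderiv ℝ f ξ η + K ≤ f (ξ + η) := by
  have hline (t : ℝ) : HasDerivAt (fun s : ℝ => ξ + s • η) η t := by
    simpa using ((hasDerivAt_id t).smul_const η).const_add ξ
  have hdiff : DifferentiableOn ℝ f U := hf.differentiableOn two_ne_zero
  have hφ : ∀ t ∈ Icc (0 : ℝ) 1,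
      HasDerivAt (fun s : ℝ => f (ξ + s • η)) (fderiv ℝ f (ξ + t • η) η) t := fun t ht =>
    ((hdiff _ (hseg t ht)).differentiableAt (hU.mem_nhds (hseg t ht))).hasFDerivAt.comp_hasDerivAt
      t (hline t)
  have hφ' : ∀ t ∈ Icc (0 : ℝ) 1, HasDerivAt (fun s : ℝ => fderiv ℝ f (ξ + s • η) η)
      (fderiv ℝ (fun y => fderiv ℝ f y η) (ξ + t • η) η) t := fun t ht => by
    have hdir : DifferentiableAt ℝ (fun y => fderiv ℝ f y η) (ξ + t • η) :=
      (hf.differentiableAt_fderiv hU (hseg t ht)).clm_apply (differentiableAt_const η)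
    exact hdir.hasFDerivAt.comp_hasDerivAt t (hline t)
  simpa using quadratic_lower_bound_of_two_mul_le_deriv2 zero_lt_one hφ hφ' hK

theorem fderiv_apply_self_of_two_homogeneous
    (hhom : ∀ s : ℝ, 0 ≤ s → ∀ y, f (s • y) = s ^ 2 * f y) {z : E} (hf : DifferentiableAt ℝ f z) :
    fderiv ℝ f z z = 2 * f z := by
  simpa using fderiv_apply_self_of_homogeneous 2 hf fun s hs => hhom s hs.le z

theorem fderiv_fderiv_apply_self_of_two_homogeneous
    (hhom : ∀ s : ℝ, 0 ≤ s → ∀ y, f (s • y) = s ^ 2 * f y) (hf : ContDiffOn ℝ 2 f {0}ᶜ)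
    {z : E} (hz : z ≠ 0) (w : E) :
    fderiv ℝ (fun y => fderiv ℝ f y z) z w = fderiv ℝ f z w := by
  have hdiff {y : E} (hy : y ≠ 0) : DifferentiableAt ℝ f y :=
    (hf.contDiffAt (isOpen_compl_singleton.mem_nhds hy)).differentiableAt two_ne_zero
  have heuler : ∀ᶠ y in 𝓝 z, fderiv ℝ f y y = 2 * f y := by
    filter_upwards [isOpen_compl_singleton.mem_nhds hz] with y hy
    exact fderiv_apply_self_of_two_homogeneous hhom (hdiff hy)
  rw [fderiv_fderiv_apply_self_of_euler 2 (hdiff hz)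
    (hf.differentiableAt_fderiv isOpen_compl_singleton hz) heuler w]
  ring

theorem quadratic_lower_bound_of_segment_through_zero
    (hhom : ∀ s : ℝ, 0 ≤ s → ∀ y, f (s • y) = s ^ 2 * f y) {ξ η : E} (hf : DifferentiableAt ℝ f ξ)
    {t : ℝ} (ht : t ∈ Ioc 0 1) (hzero : ξ + t • η = 0) {K : ℝ} (hKη : K ≤ f η)
    (hKη' : K ≤ f (-η)) :
    f ξ + fderiv ℝ f ξ η + K ≤ f (ξ + η) := by
  obtain ⟨ht0, ht1⟩ := ht
  have hξ : ξ = -(t • η) := eq_neg_of_add_eq_zero_left hzero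
  have hfξ : f ξ = t ^ 2 * f (-η) := by rw [hξ, ← smul_neg, hhom t ht0.le]
  have hfξη : f (ξ + η) = (1 - t) ^ 2 * f η := by
    rw [show ξ + η = (1 - t) • η by rw [hξ, sub_smul, one_smul]; abel, hhom _ (sub_nonneg.2 ht1)]
  -- Euler's identity `Df(ξ) ξ = 2 f(ξ)` with `ξ = -t η` determines `Df(ξ) η`.
  have hderiv : fderiv ℝ f ξ η = -2 * t * f (-η) := by
    have heuler := fderiv_apply_self_of_two_homogeneous hhom hf
    have hlin : fderiv ℝ f ξ ξ = -t * fderiv ℝ f ξ η := by nth_rw 2 [hξ]; simp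
    apply mul_left_cancel₀ ht0.ne'
    linarith
  rw [hfξ, hfξη, hderiv]
  nlinarith [mul_le_mul_of_nonneg_left hKη (sq_nonneg (1 - t)),
    mul_le_mul_of_nonneg_left hKη' (mul_nonneg ht0.le (by linarith : (0 : ℝ) ≤ 2 - t))]

theorem quadratic_lower_bound_of_two_homogeneous
    (hhom : ∀ s : ℝ, 0 ≤ s → ∀ y, f (s • y) = s ^ 2 * f y) (hf : ContDiffOn ℝ 2 f {0}ᶜ)
    {ξ η : E} (hξ : ξ ≠ 0) {K : ℝ}
    (hK : ∀ z ≠ 0, 2 * K ≤ fderiv ℝ (fun y => fderiv ℝ f y η) z η) :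
    f ξ + fderiv ℝ f ξ η + K ≤ f (ξ + η) := by
  have hdiff {z : E} (hz : z ≠ 0) : DifferentiableAt ℝ f z :=
    (hf.contDiffAt (isOpen_compl_singleton.mem_nhds hz)).differentiableAt two_ne_zero
  by_cases hzero : ∃ t ∈ Icc (0 : ℝ) 1, ξ + t • η = 0
  · obtain ⟨t, ⟨ht0, ht1⟩, hzero⟩ := hzero
    have ht : 0 < t := ht0.lt_of_ne (by rintro rfl; simp_all)
    have hη : η ≠ 0 := by rintro rfl; simp_all
    have hdiag {z : E} (hz : z ≠ 0) : fderiv ℝ (fun y => fderiv ℝ f y z) z z = 2 * f z := by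
      rw [fderiv_fderiv_apply_self_of_two_homogeneous hhom hf hz,
        fderiv_apply_self_of_two_homogeneous hhom (hdiff hz)]
    refine quadratic_lower_bound_of_segment_through_zero hhom (hdiff hξ) ⟨ht, ht1⟩ hzero ?_ ?_
    · linarith [hK η hη, hdiag hη]
    · have hKneg := hK (-η) (neg_ne_zero.2 hη)
      rw [← fderiv_fderiv_apply_neg, hdiag (neg_ne_zero.2 hη)] at hKneg
      linarith
  · push Not at hzero
    exact quadratic_lower_bound_along_segment isOpen_compl_singleton hf hzero
      fun t ht => hK _ (hzero t ht)

end

theorem stmt_0_general (n : ℕ)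
    (F : EuclideanSpace ℝ (Fin n) → ℝ)
    (hFhom : ∀ s : ℝ, 0 ≤ s → ∀ y : EuclideanSpace ℝ (Fin n), F (s • y) = s * F y)
    (hFsmooth : ContDiffOn ℝ 2 (fun y => (F y) ^ 2) {(0 : EuclideanSpace ℝ (Fin n))}ᶜ)
    (g : EuclideanSpace ℝ (Fin n) → EuclideanSpace ℝ (Fin n) → EuclideanSpace ℝ (Fin n) → ℝ)
    (hg : ∀ z, z ≠ 0 → ∀ v w : EuclideanSpace ℝ (Fin n),
      g z v w = (1 / 2) * fderiv ℝ (fun y => fderiv ℝ (fun y' => (F y') ^ 2) y v) z w)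
    (hg0 : ∀ v w : EuclideanSpace ℝ (Fin n), g 0 v w = 0)
    (Λ : ℝ) (hΛ : 1 ≤ Λ)
    (hunif : ∀ z, z ≠ 0 → ∀ v : EuclideanSpace ℝ (Fin n),
      (F v) ^ 2 / Λ ≤ g z v v ∧ g z v v ≤ Λ * (F v) ^ 2) :
    ∀ ξ η : EuclideanSpace ℝ (Fin n),
      (F (ξ + η)) ^ 2 ≥ (F ξ) ^ 2 + 2 * g ξ ξ η + (F η) ^ 2 / Λ := by
  intro ξ η
  have hhom (s : ℝ) (hs : 0 ≤ s) (y : EuclideanSpace ℝ (Fin n)) :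
      F (s • y) ^ 2 = s ^ 2 * F y ^ 2 := by
    rw [hFhom s hs y, mul_pow]
  rcases eq_or_ne ξ 0 with rfl | hξ
  · have hF0 : F 0 = 0 := by simpa using hFhom 0 le_rfl 0
    simpa [hF0, hg0] using div_le_self (sq_nonneg (F η)) hΛ
  have hK (z) (hz : z ≠ 0) :
      2 * (F η ^ 2 / Λ) ≤ fderiv ℝ (fun y => fderiv ℝ (fun y' => F y' ^ 2) y η) z η := by
    linarith [(hunif z hz η).1, hg z hz η η]
  have hlower := quadratic_lower_bound_of_two_homogeneous hhom hFsmooth hξ hK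
  rw [hg ξ hξ, fderiv_fderiv_apply_self_of_two_homogeneous hhom hFsmooth hξ]
  linarith

/-- **Refined Cauchy–Schwarz inequality for Minkowski norms** (Theorem 3.4).
`F` is a Minkowski norm on `ℝⁿ`, `g` its fundamental form (one half the second
Fréchet derivative of `F²`, set to `0` at the origin), and `Λ ≥ 1` bounds the
uniformity constant.  Then `F(ξ+η)² ≥ F(ξ)² + 2 g_ξ(ξ,η) + F(η)²/Λ`. -/
theorem stmt_0 (n : ℕ) (hn : 1 ≤ n)
    (F : EuclideanSpace ℝ (Fin n) → ℝ)
    (hFcont : Continuous F)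
    (hFpos : ∀ y : EuclideanSpace ℝ (Fin n), y ≠ 0 → 0 < F y)
    (hFhom : ∀ s : ℝ, 0 ≤ s → ∀ y : EuclideanSpace ℝ (Fin n), F (s • y) = s * F y)
    (hFsmooth : ContDiffOn ℝ 2 (fun y => (F y) ^ 2) {(0 : EuclideanSpace ℝ (Fin n))}ᶜ)
    (g : EuclideanSpace ℝ (Fin n) → EuclideanSpace ℝ (Fin n) → EuclideanSpace ℝ (Fin n) → ℝ)
    (hg : ∀ z, z ≠ 0 → ∀ v w : EuclideanSpace ℝ (Fin n),
      g z v w = (1 / 2) * fderiv ℝ (fun y => fderiv ℝ (fun y' => (F y') ^ 2) y v) z w)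
    (hg0 : ∀ v w : EuclideanSpace ℝ (Fin n), g 0 v w = 0)
    (Λ : ℝ) (hΛ : 1 ≤ Λ)
    (hunif : ∀ z, z ≠ 0 → ∀ v : EuclideanSpace ℝ (Fin n),
      (F v) ^ 2 / Λ ≤ g z v v ∧ g z v v ≤ Λ * (F v) ^ 2) :
    ∀ ξ η : EuclideanSpace ℝ (Fin n),
      (F (ξ + η)) ^ 2 ≥ (F ξ) ^ 2 + 2 * g ξ ξ η + (F η) ^ 2 / Λ :=
  stmt_0_general n F hFhom hFsmooth g hg hg0 Λ hΛ hunif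
end

section
/- Let n ≥ 1 and let F : ℝⁿ → ℝ be a Minkowski norm (continuous, F(y) > 0 for y ≠ 0, F(s·y) = s·F(y) for s ≥ 0, F² twice continuously differentiable on ℝⁿ∖{0}) whose fundamental form g_z(v,w) := (1/2)·D²(F²)(z)(v,w) is positive definite for each z ≠ 0. Define the dual norm F*(ξ) := sup_{y ≠ 0} ⟨ξ,y⟩/F(y) (identifying (ℝⁿ)* with ℝⁿ via the Euclidean inner product), assume F*² is twice continuously differentiable on ℝⁿ∖{0} with positive definite g*_η(ζ,ζ) := (1/2)·D²(F*²)(η)(ζ,ζ) for η ≠ 0, and suppose the uniformity constant Λ_F := sup_{X,Y,Z ≠ 0} g_X(Y,Y)/g_Z(Y,Y) is finite. Then the dual uniformity constant satisfies Λ_{F*} := sup_{ξ,η,ζ ≠ 0} g*_ξ(ζ,ζ)/g*_η(ζ,ζ) = Λ_F. -/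
/-!
The Legendre map `ℓ y = ½ ∇(F²)(y)` sends `y ≠ 0` to a nonzero vector with `F*(ℓ y) = F y`: the
fundamental inequality `½ D(F²)(y) u ≤ F(y) F(u)` is an equality at `u = y`. Every `ξ ≠ 0` is some
`ℓ y`, namely at a maximum point of `⟪ξ, x⟫ - F(x)²/2`. Differentiating `F*² ∘ ℓ = F²` and using
Euler's identity shows that the Legendre map of `F*` inverts `ℓ`, so the Hessian operators `H_X`,
with `g_X(v, v) = ⟪H_X v, v⟫`, satisfy `H*_{ℓ X} = H_X⁻¹`. For `Y = H_X⁻¹ ζ`, Cauchy–Schwarz for the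
positive operator `H_Z` gives `⟪ζ, Y⟫² ≤ g_Z(Y, Y) g*_{ℓ Z}(ζ, ζ)`, that is
`g*_{ℓ X}(ζ, ζ) / g*_{ℓ Z}(ζ, ζ) ≤ g_Z(Y, Y) / g_X(Y, Y)`; exchanging the roles of `H` and `H*`
bounds the primal ratios by dual ones in the same way.
-/

open scoped RealInnerProductSpace Gradient
open InnerProductSpace Set Filter Topology

theorem ContDiffAt.differentiableAt_fderiv {𝕜 E G : Type*} [NontriviallyNormedField 𝕜]
    [NormedAddCommGroup E] [NormedSpace 𝕜 E] [NormedAddCommGroup G] [NormedSpace 𝕜 G]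
    {f : E → G} {x : E} (h : ContDiffAt 𝕜 2 f x) : DifferentiableAt 𝕜 (fderiv 𝕜 f) x :=
  (h.fderiv_right (m := 1) (by norm_num)).differentiableAt one_ne_zero

theorem fderiv_clm_apply_const {𝕜 E G K : Type*} [NontriviallyNormedField 𝕜]
    [NormedAddCommGroup E] [NormedSpace 𝕜 E] [NormedAddCommGroup G] [NormedSpace 𝕜 G]
    [NormedAddCommGroup K] [NormedSpace 𝕜 K] {c : E → G →L[𝕜] K} {x : E}
    (hc : DifferentiableAt 𝕜 c x) (u : G) (w : E) :
    fderiv 𝕜 (fun y => c y u) x w = fderiv 𝕜 c x w u := by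
  simp [fderiv_clm_apply hc (differentiableAt_const u)]

theorem HasFDerivAt.leftInverse_of_eventually_leftInverse {𝕜 E G : Type*}
    [NontriviallyNormedField 𝕜] [NormedAddCommGroup E] [NormedSpace 𝕜 E]
    [NormedAddCommGroup G] [NormedSpace 𝕜 G] {φ : E → G} {ψ : G → E} {A : E →L[𝕜] G}
    {B : G →L[𝕜] E} {x : E} (hφ : HasFDerivAt φ A x) (hψ : HasFDerivAt ψ B (φ x))
    (h : ∀ᶠ y in 𝓝 x, ψ (φ y) = y) : Function.LeftInverse B A := fun v => by
  have hid : HasFDerivAt id (B.comp A) x :=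
    (hψ.comp x hφ).congr_of_eventuallyEq (h.mono fun y hy => hy.symm)
  simpa using DFunLike.congr_fun (hid.unique (hasFDerivAt_id x)) v

section SqHomogeneous

variable {E : Type*} [NormedAddCommGroup E] [NormedSpace ℝ E] {f : E → ℝ}

theorem hasDerivAt_comp_smul_one {G : Type*} [NormedAddCommGroup G] [NormedSpace ℝ G]
    {φ : E → G} {φ' : E →L[ℝ] G} {y : E} (h : HasFDerivAt φ φ' y) :
    HasDerivAt (fun t : ℝ => φ (t • y)) (φ' y) 1 :=
  h.comp_hasDerivAt_of_eq (1 : ℝ) (((hasDerivAt_id (1 : ℝ)).smul_const y).congr_deriv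
    (one_smul ℝ y)) (one_smul ℝ y).symm

theorem fderiv_apply_self_of_sq_homogeneous
    (hf : ∀ s : ℝ, 0 ≤ s → ∀ y, f (s • y) = s ^ 2 * f y) {y : E}
    (hy : DifferentiableAt ℝ f y) : fderiv ℝ f y y = 2 * f y := by
  have hpow : HasDerivAt (fun t : ℝ => f (t • y)) (2 * f y) 1 := by
    refine HasDerivAt.congr_of_eventuallyEq (f := fun t : ℝ => t ^ 2 * f y)
      (by simpa using (hasDerivAt_pow 2 (1 : ℝ)).mul_const (f y)) ?_
    filter_upwards [eventually_gt_nhds one_pos] with t ht using hf t ht.le y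
  exact (hasDerivAt_comp_smul_one hy.hasFDerivAt).unique hpow

theorem hasFDerivAt_smul_of_sq_homogeneous
    (hf : ∀ s : ℝ, 0 ≤ s → ∀ y, f (s • y) = s ^ 2 * f y) {y : E}
    (hy : DifferentiableAt ℝ f y) {s : ℝ} (hs : 0 < s) :
    HasFDerivAt f (s • fderiv ℝ f y) (s • y) := by
  have hscale : (fun x => s ^ 2 * f (s⁻¹ • x)) = f := by
    funext x
    rw [hf _ (inv_nonneg.mpr hs.le), ← mul_assoc, ← mul_pow, mul_inv_cancel₀ hs.ne', one_pow,
      one_mul]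
  have hy' : HasFDerivAt f (fderiv ℝ f y) (s⁻¹ • s • y) := by
    rw [inv_smul_smul₀ hs.ne']; exact hy.hasFDerivAt
  have h : HasFDerivAt (fun x => s ^ 2 * f (s⁻¹ • x))
      (s ^ 2 • (fderiv ℝ f y).comp (s⁻¹ • ContinuousLinearMap.id ℝ E)) (s • y) :=
    (hy'.comp (s • y) ((hasFDerivAt_id _).const_smul s⁻¹)).const_mul (s ^ 2)
  rw [hscale] at h
  convert h using 1
  ext v
  simp only [smul_apply, ContinuousLinearMap.comp_apply,
    ContinuousLinearMap.id_apply, map_smul, smul_eq_mul]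
  field_simp

theorem fderiv_fderiv_apply_self_of_sq_homogeneous
    (hf : ∀ s : ℝ, 0 ≤ s → ∀ y, f (s • y) = s ^ 2 * f y) {y : E}
    (hy : DifferentiableAt ℝ f y) (hy2 : DifferentiableAt ℝ (fderiv ℝ f) y) :
    fderiv ℝ (fderiv ℝ f) y y = fderiv ℝ f y := by
  have hlin : HasDerivAt (fun t : ℝ => fderiv ℝ f (t • y)) (fderiv ℝ f y) 1 := by
    refine HasDerivAt.congr_of_eventuallyEq (f := fun t : ℝ => t • fderiv ℝ f y)
      (by simpa using (hasDerivAt_id (1 : ℝ)).smul_const (fderiv ℝ f y)) ?_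
    filter_upwards [eventually_gt_nhds one_pos] with t ht
    exact (hasFDerivAt_smul_of_sq_homogeneous hf hy ht).fderiv
  exact (hasDerivAt_comp_smul_one hy2.hasFDerivAt).unique hlin

end SqHomogeneous

section Convexity

variable {E : Type*} [NormedAddCommGroup E] [NormedSpace ℝ E] {f : E → ℝ} {s : Set E}

theorem fderiv_apply_sub_le_of_segment
    (hdiff : ∀ z ∈ s, DifferentiableAt ℝ f z)
    (hdiff2 : ∀ z ∈ s, DifferentiableAt ℝ (fderiv ℝ f) z)
    (hpsd : ∀ z ∈ s, ∀ v, 0 ≤ fderiv ℝ (fderiv ℝ f) z v v)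
    {y u : E} (hseg : ∀ t ∈ Icc (0 : ℝ) 1, y + t • (u - y) ∈ s) :
    fderiv ℝ f y (u - y) ≤ f u - f y := by
  have hc : ∀ t : ℝ, HasDerivAt (fun t : ℝ => y + t • (u - y)) (u - y) t := fun t =>
    (((hasDerivAt_id t).smul_const (u - y)).const_add y).congr_deriv (one_smul ℝ _)
  have hfc : ∀ t ∈ Icc (0 : ℝ) 1, HasDerivAt (fun t : ℝ => f (y + t • (u - y)))
      (fderiv ℝ f (y + t • (u - y)) (u - y)) t := fun t ht =>
    (hdiff (y + t • (u - y)) (hseg t ht)).hasFDerivAt.comp_hasDerivAt t (hc t)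
  have hφ : ∀ t ∈ Icc (0 : ℝ) 1, HasDerivAt (fun t : ℝ => fderiv ℝ f (y + t • (u - y)) (u - y))
      (fderiv ℝ (fderiv ℝ f) (y + t • (u - y)) (u - y) (u - y)) t := fun t ht => by
    have hDf : HasDerivAt (fun t : ℝ => fderiv ℝ f (y + t • (u - y)))
        (fderiv ℝ (fderiv ℝ f) (y + t • (u - y)) (u - y)) t :=
      (hdiff2 (y + t • (u - y)) (hseg t ht)).hasFDerivAt.comp_hasDerivAt t (hc t)
    simpa using hDf.clm_apply (hasDerivAt_const t (u - y))
  have hmono : MonotoneOn (fun t : ℝ => fderiv ℝ f (y + t • (u - y)) (u - y)) (Icc 0 1) := by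
    refine monotoneOn_of_deriv_nonneg (convex_Icc 0 1)
      (fun t ht => (hφ t ht).continuousAt.continuousWithinAt)
      (fun t ht => (hφ t (interior_subset ht)).differentiableAt.differentiableWithinAt)
      (fun t ht => ?_)
    rw [(hφ t (interior_subset ht)).deriv]
    exact hpsd _ (hseg t (interior_subset ht)) _
  obtain ⟨τ, hτ, hslope⟩ := exists_hasDerivAt_eq_slope _ _ zero_lt_one
    (fun t ht => (hfc t ht).continuousAt.continuousWithinAt)
    (fun t ht => hfc t (Ioo_subset_Icc_self ht))
  have hφ0 := hmono (left_mem_Icc.mpr zero_le_one) (Ioo_subset_Icc_self hτ) hτ.1.le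
  simp only [zero_smul, add_zero, one_smul, add_sub_cancel, sub_zero, div_one] at hφ0 hslope
  linarith

end Convexity

section MinkowskiNorm

variable {E : Type*} [NormedAddCommGroup E] [NormedSpace ℝ E] {F : E → ℝ}

theorem sq_homogeneous_of_homogeneous (hFhom : ∀ s : ℝ, 0 ≤ s → ∀ y, F (s • y) = s * F y) :
    ∀ s : ℝ, 0 ≤ s → ∀ y, F (s • y) ^ 2 = s ^ 2 * F y ^ 2 := fun s hs y => by
  rw [hFhom s hs y, mul_pow]

theorem apply_zero_of_homogeneous (hFhom : ∀ s : ℝ, 0 ≤ s → ∀ y, F (s • y) = s * F y) :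
    F 0 = 0 := by
  simpa using hFhom 0 le_rfl 0

theorem fderiv_sq_apply_le_of_eq (hFhom : ∀ s : ℝ, 0 ≤ s → ∀ y, F (s • y) = s * F y)
    (hFsmooth : ContDiffOn ℝ 2 (fun y => F y ^ 2) {0}ᶜ)
    (hpsd : ∀ z ≠ 0, ∀ v, 0 ≤ fderiv ℝ (fderiv ℝ fun y => F y ^ 2) z v v)
    {y u : E} (hy : y ≠ 0) (hu : F u = F y) :
    fderiv ℝ (fun y => F y ^ 2) y u ≤ 2 * F y ^ 2 := by
  have hC2 : ∀ z ∈ ({0}ᶜ : Set E), ContDiffAt ℝ 2 (fun y => F y ^ 2) z := fun z hz =>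
    hFsmooth.contDiffAt (isOpen_compl_singleton.mem_nhds hz)
  have heuler := fderiv_apply_self_of_sq_homogeneous (sq_homogeneous_of_homogeneous hFhom)
    ((hC2 y hy).differentiableAt two_ne_zero)
  by_cases hseg : ∀ t ∈ Icc (0 : ℝ) 1, y + t • (u - y) ∈ ({0}ᶜ : Set E)
  · have hsub := fderiv_apply_sub_le_of_segment
      (fun z hz => (hC2 z hz).differentiableAt two_ne_zero)
      (fun z hz => (hC2 z hz).differentiableAt_fderiv) hpsd hseg
    rw [map_sub, hu] at hsub
    linarith
  · -- the segment from `y` to `u` passes through `0`, so `u` is a nonpositive multiple of `y`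
    push Not at hseg
    obtain ⟨t, ⟨ht0, ht1⟩, hzero⟩ := hseg
    rw [mem_compl_singleton_iff, not_not] at hzero
    have ht : 0 < t := ht0.lt_of_ne (by rintro rfl; simp [hy] at hzero)
    have htu : t • u = (t - 1) • y := by
      rw [sub_smul, one_smul, ← sub_eq_zero, ← hzero]; module
    have hD := congrArg (fderiv ℝ (fun y => F y ^ 2) y) htu
    rw [map_smul, map_smul, heuler, smul_eq_mul, smul_eq_mul] at hD
    nlinarith [sq_nonneg (F y)]

theorem fderiv_sq_apply_le_mul (hFpos : ∀ y, y ≠ 0 → 0 < F y)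
    (hFhom : ∀ s : ℝ, 0 ≤ s → ∀ y, F (s • y) = s * F y)
    (hFsmooth : ContDiffOn ℝ 2 (fun y => F y ^ 2) {0}ᶜ)
    (hpsd : ∀ z ≠ 0, ∀ v, 0 ≤ fderiv ℝ (fderiv ℝ fun y => F y ^ 2) z v v)
    {y : E} (hy : y ≠ 0) (u : E) :
    fderiv ℝ (fun y => F y ^ 2) y u ≤ 2 * F y * F u := by
  rcases eq_or_ne u 0 with rfl | hu
  · simp [apply_zero_of_homogeneous hFhom]
  have hFy := hFpos y hy
  have hFu := hFpos u hu
  have hscale : F ((F y / F u) • u) = F y := by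
    rw [hFhom _ (by positivity)]; field_simp
  have h := fderiv_sq_apply_le_of_eq hFhom hFsmooth hpsd hy hscale
  rw [map_smul, smul_eq_mul, div_mul_eq_mul_div, div_le_iff₀ hFu] at h
  nlinarith

theorem exists_pos_mul_norm_le [FiniteDimensional ℝ E] [Nontrivial E] (hFcont : Continuous F)
    (hFpos : ∀ y, y ≠ 0 → 0 < F y) (hFhom : ∀ s : ℝ, 0 ≤ s → ∀ y, F (s • y) = s * F y) :
    ∃ c > 0, ∀ x, c * ‖x‖ ≤ F x := by
  obtain ⟨x₀, hx₀, hmin⟩ := (isCompact_sphere (0 : E) 1).exists_isMinOn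
    (NormedSpace.sphere_nonempty.mpr zero_le_one) hFcont.continuousOn
  have hx₀0 : x₀ ≠ 0 := ne_zero_of_mem_unit_sphere ⟨x₀, hx₀⟩
  refine ⟨F x₀, hFpos x₀ hx₀0, fun x => ?_⟩
  rcases eq_or_ne x 0 with rfl | hx
  · simp [apply_zero_of_homogeneous hFhom]
  have hxn : 0 < ‖x‖ := norm_pos_iff.mpr hx
  have hunit : ‖x‖⁻¹ • x ∈ Metric.sphere (0 : E) 1 := by
    simp [norm_smul, hxn.ne']
  calc F x₀ * ‖x‖ ≤ F (‖x‖⁻¹ • x) * ‖x‖ := mul_le_mul_of_nonneg_right (hmin hunit) hxn.le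
    _ = F x := by rw [hFhom _ (by positivity)]; field_simp

end MinkowskiNorm

section PositiveOperator

variable {E : Type*} [NormedAddCommGroup E] [InnerProductSpace ℝ E]

theorem inner_apply_sq_le {P : E →L[ℝ] E} (hsymm : ∀ v w, ⟪P v, w⟫ = ⟪P w, v⟫)
    (hpsd : ∀ v, 0 ≤ ⟪P v, v⟫) (u v : E) : ⟪P u, v⟫ ^ 2 ≤ ⟪P u, u⟫ * ⟪P v, v⟫ :=
  LinearMap.BilinForm.apply_sq_le_of_symm ((innerₗ E).comp (P : E →ₗ[ℝ] E)) hpsd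
    ⟨fun v w => hsymm v w⟩ u v

theorem inner_sq_le_of_leftInverse {P Q : E →L[ℝ] E} (hsymm : ∀ v w, ⟪P v, w⟫ = ⟪P w, v⟫)
    (hpsd : ∀ v, 0 ≤ ⟪P v, v⟫) (hPQ : Function.LeftInverse P Q) (u v : E) :
    ⟪u, v⟫ ^ 2 ≤ ⟪P v, v⟫ * ⟪Q u, u⟫ := by
  have := inner_apply_sq_le hsymm hpsd (Q u) v
  rwa [hPQ, real_inner_comm (Q u) u, mul_comm] at this

theorem ContinuousLinearMap.surjective_of_inner_apply_self_pos [FiniteDimensional ℝ E]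
    {A : E →L[ℝ] E} (hA : ∀ v ≠ 0, 0 < ⟪A v, v⟫) : Function.Surjective A := by
  refine LinearMap.injective_iff_surjective.mp fun a b hab => ?_
  by_contra hne
  have := hA (a - b) (sub_ne_zero.mpr hne)
  simp_all

end PositiveOperator

section LegendreMap

variable {E : Type*} [NormedAddCommGroup E] [InnerProductSpace ℝ E] [CompleteSpace E]

/-- The Legendre transformation `y ↦ g_y(y, ·)` of the Finsler structure `f = F²`, with covectors
identified with vectors through the inner product. -/
noncomputable def legendreMap (f : E → ℝ) (y : E) : E := (1 / 2 : ℝ) • ∇ f y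

theorem inner_legendreMap (f : E → ℝ) (y v : E) :
    ⟪legendreMap f y, v⟫ = 1 / 2 * fderiv ℝ f y v := by
  rw [legendreMap, real_inner_smul_left, inner_gradient_left]

theorem inner_legendreMap_self {f : E → ℝ} (hf : ∀ s : ℝ, 0 ≤ s → ∀ y, f (s • y) = s ^ 2 * f y)
    {y : E} (hy : DifferentiableAt ℝ f y) : ⟪legendreMap f y, y⟫ = f y := by
  rw [inner_legendreMap, fderiv_apply_self_of_sq_homogeneous hf hy]
  ring

theorem hasFDerivAt_legendreMap {f : E → ℝ} {z : E} (h : DifferentiableAt ℝ (fderiv ℝ f) z) :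
    HasFDerivAt (legendreMap f) ((1 / 2 : ℝ) •
      ((toDual ℝ E).symm.toLinearIsometry.toContinuousLinearMap : StrongDual ℝ E →L[ℝ] E).comp
        (fderiv ℝ (fderiv ℝ f) z)) z :=
  ((((toDual ℝ E).symm.toLinearIsometry.toContinuousLinearMap : StrongDual ℝ E →L[ℝ] E)
    ).hasFDerivAt.comp z h.hasFDerivAt).const_smul _

theorem inner_fderiv_legendreMap_apply {f : E → ℝ} {z : E}
    (h : DifferentiableAt ℝ (fderiv ℝ f) z) (v w : E) :
    ⟪fderiv ℝ (legendreMap f) z v, w⟫ = 1 / 2 * fderiv ℝ (fderiv ℝ f) z v w := by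
  rw [(hasFDerivAt_legendreMap h).fderiv]
  simp [real_inner_smul_left, toDual_symm_apply]

theorem half_fderiv_fderiv_apply_eq_inner {f : E → ℝ} {z : E}
    (h : DifferentiableAt ℝ (fderiv ℝ f) z) (v : E) :
    1 / 2 * fderiv ℝ (fun y => fderiv ℝ f y v) z v = ⟪fderiv ℝ (legendreMap f) z v, v⟫ := by
  rw [fderiv_clm_apply_const h, inner_fderiv_legendreMap_apply h]

theorem inner_fderiv_legendreMap_comm {f : E → ℝ} {z : E} (h : ContDiffAt ℝ 2 f z) (v w : E) :
    ⟪fderiv ℝ (legendreMap f) z v, w⟫ = ⟪fderiv ℝ (legendreMap f) z w, v⟫ := by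
  rw [inner_fderiv_legendreMap_apply h.differentiableAt_fderiv,
    inner_fderiv_legendreMap_apply h.differentiableAt_fderiv,
    h.isSymmSndFDerivAt (by simp) v w]

variable [FiniteDimensional ℝ E]

theorem legendreMap_legendreMap {f fs : E → ℝ}
    (hf : ∀ s : ℝ, 0 ≤ s → ∀ y, f (s • y) = s ^ 2 * f y) {y : E} (hy : ContDiffAt ℝ 2 f y)
    (hpos : ∀ v ≠ 0, 0 < fderiv ℝ (fderiv ℝ f) y v v)
    (hfs : DifferentiableAt ℝ fs (legendreMap f y)) (hcomp : fs ∘ legendreMap f =ᶠ[𝓝 y] f) :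
    legendreMap fs (legendreMap f y) = y := by
  have hy1 := hy.differentiableAt two_ne_zero
  have hy2 := hy.differentiableAt_fderiv
  set H := fderiv ℝ (legendreMap f) y
  have hchain : fderiv ℝ f y = (fderiv ℝ fs (legendreMap f y)).comp H :=
    hy1.hasFDerivAt.unique <| (hfs.hasFDerivAt.comp y
      (hasFDerivAt_legendreMap hy2).differentiableAt.hasFDerivAt).congr_of_eventuallyEq hcomp.symm
  have hH : Function.Surjective H := ContinuousLinearMap.surjective_of_inner_apply_self_pos
    fun v hv => by rw [inner_fderiv_legendreMap_apply hy2]; linarith [hpos v hv]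
  -- both `legendreMap fs (legendreMap f y)` and `y` pair with `H v` to `Df(y) v / 2`
  have horth : ∀ v, ⟪legendreMap fs (legendreMap f y) - y, H v⟫ = 0 := fun v => by
    rw [inner_sub_left, inner_legendreMap, real_inner_comm, inner_fderiv_legendreMap_apply hy2,
      hy.isSymmSndFDerivAt (by simp), fderiv_fderiv_apply_self_of_sq_homogeneous hf hy1 hy2,
      hchain, ContinuousLinearMap.comp_apply, sub_self]
  obtain ⟨v, hv⟩ := hH (legendreMap fs (legendreMap f y) - y)
  have := horth v
  rwa [hv, inner_self_eq_zero, sub_eq_zero] at this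

end LegendreMap

section MinkowskiLegendre

variable {E : Type*} [NormedAddCommGroup E] [InnerProductSpace ℝ E] [FiniteDimensional ℝ E]
  {F : E → ℝ}

theorem exists_legendreMap_eq (hFcont : Continuous F) (hFpos : ∀ y, y ≠ 0 → 0 < F y)
    (hFhom : ∀ s : ℝ, 0 ≤ s → ∀ y, F (s • y) = s * F y)
    (hdiff : ∀ y ≠ 0, DifferentiableAt ℝ (fun y => F y ^ 2) y) {ξ : E} (hξ : ξ ≠ 0) :
    ∃ y ≠ 0, legendreMap (fun y => F y ^ 2) y = ξ := by
  have : Nontrivial E := ⟨⟨ξ, 0, hξ⟩⟩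
  obtain ⟨c, hc, hcF⟩ := exists_pos_mul_norm_le hFcont hFpos hFhom
  -- `y` is a maximum point of `φ x = ⟪ξ, x⟫ - F(x)²/2`, which tends to `-∞` at infinity
  set φ : E → ℝ := fun x => ⟪ξ, x⟫ - 1 / 2 * F x ^ 2
  have hφcont : Continuous φ := by fun_prop
  have hφfar : ∀ᶠ x in cocompact E, φ x ≤ 0 := by
    filter_upwards [tendsto_norm_cocompact_atTop.eventually
      (eventually_ge_atTop (2 * ‖ξ‖ / c ^ 2))] with x hx
    rw [div_le_iff₀ (by positivity)] at hx
    have hFx : c * ‖x‖ ≤ F x := hcF x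
    have hFx2 := mul_le_mul hFx hFx (by positivity) (hFx.trans' (by positivity))
    have := mul_le_mul_of_nonneg_left hx (norm_nonneg x)
    show ⟪ξ, x⟫ - 1 / 2 * F x ^ 2 ≤ 0
    nlinarith [real_inner_le_norm ξ x]
  have hFξ := hFpos ξ hξ
  have hξn : 0 < ‖ξ‖ := norm_pos_iff.mpr hξ
  have hφpos : 0 < φ ((‖ξ‖ ^ 2 / F ξ ^ 2) • ξ) := by
    simp only [φ, real_inner_smul_right, real_inner_self_eq_norm_sq]
    rw [hFhom _ (by positivity)]
    field_simp
    nlinarith [pow_pos hξn 4]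
  obtain ⟨y, hy⟩ := hφcont.exists_forall_ge' _ (hφfar.mono fun x hx => hx.trans hφpos.le)
  have hy0 : y ≠ 0 := by
    rintro rfl
    have := (hφpos.trans_le (hy _))
    simp [φ, apply_zero_of_homogeneous hFhom] at this
  have hφy : HasFDerivAt φ (innerSL ℝ ξ - (1 / 2 : ℝ) • fderiv ℝ (fun y => F y ^ 2) y) y :=
    (innerSL ℝ ξ).hasFDerivAt.sub ((hdiff y hy0).hasFDerivAt.const_mul _)
  have hcrit := IsLocalMax.hasFDerivAt_eq_zero (Eventually.of_forall hy) hφy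
  refine ⟨y, hy0, ext_inner_right ℝ fun v => ?_⟩
  have := DFunLike.congr_fun hcrit v
  simp only [sub_apply, smul_apply, innerSL_apply_apply, zero_apply, smul_eq_mul,
    sub_eq_zero] at this
  rw [inner_legendreMap, this]

theorem ciSup_inner_legendreMap_div (hFpos : ∀ y, y ≠ 0 → 0 < F y)
    (hFhom : ∀ s : ℝ, 0 ≤ s → ∀ y, F (s • y) = s * F y)
    (hFsmooth : ContDiffOn ℝ 2 (fun y => F y ^ 2) {0}ᶜ)
    (hpsd : ∀ z ≠ 0, ∀ v, 0 ≤ fderiv ℝ (fderiv ℝ fun y => F y ^ 2) z v v)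
    {y : E} (hy : y ≠ 0) :
    ⨆ u : {u : E // u ≠ 0}, ⟪legendreMap (fun y => F y ^ 2) y, (u : E)⟫ / F u = F y := by
  have hbound : ∀ u : {u : E // u ≠ 0},
      ⟪legendreMap (fun y => F y ^ 2) y, (u : E)⟫ / F u ≤ F y := fun ⟨u, hu⟩ => by
      rw [div_le_iff₀ (hFpos u hu), inner_legendreMap]
      linarith [fderiv_sq_apply_le_mul hFpos hFhom hFsmooth hpsd hy u]
  have hself : ⟪legendreMap (fun y => F y ^ 2) y, y⟫ / F y = F y := by
    rw [inner_legendreMap_self (sq_homogeneous_of_homogeneous hFhom)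
      ((hFsmooth.contDiffAt (isOpen_compl_singleton.mem_nhds hy)).differentiableAt two_ne_zero)]
    field_simp [(hFpos y hy).ne']
  have : Nonempty {u : E // u ≠ 0} := ⟨⟨y, hy⟩⟩
  have hbdd : BddAbove (range fun u : {u : E // u ≠ 0} =>
      ⟪legendreMap (fun y => F y ^ 2) y, (u : E)⟫ / F u) :=
    ⟨F y, by rintro _ ⟨u, rfl⟩; exact hbound u⟩
  exact le_antisymm (ciSup_le hbound) (hself ▸ le_ciSup hbdd ⟨y, hy⟩)

end MinkowskiLegendre

section LegendreDuality

variable {E : Type*} [NormedAddCommGroup E] [InnerProductSpace ℝ E] [FiniteDimensional ℝ E]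
  {F Fs : E → ℝ}

theorem legendreMap_sq_ne_zero (hFpos : ∀ y, y ≠ 0 → 0 < F y)
    (hFhom : ∀ s : ℝ, 0 ≤ s → ∀ y, F (s • y) = s * F y) {y : E} (hy : y ≠ 0)
    (hdiff : DifferentiableAt ℝ (fun y => F y ^ 2) y) :
    legendreMap (fun y => F y ^ 2) y ≠ 0 := fun h => by
  have := inner_legendreMap_self (sq_homogeneous_of_homogeneous hFhom) hdiff
  rw [h, inner_zero_left] at this
  exact (pow_pos (hFpos y hy) 2).ne this

theorem legendreMap_dual_legendreMap (hFpos : ∀ y, y ≠ 0 → 0 < F y)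
    (hFhom : ∀ s : ℝ, 0 ≤ s → ∀ y, F (s • y) = s * F y)
    (hFsmooth : ContDiffOn ℝ 2 (fun y => F y ^ 2) {0}ᶜ)
    (hpos : ∀ z ≠ 0, ∀ v ≠ 0, 0 < fderiv ℝ (fderiv ℝ fun y => F y ^ 2) z v v)
    (hFs : ∀ ξ, Fs ξ = ⨆ y : {y : E // y ≠ 0}, ⟪ξ, (y : E)⟫ / F y)
    (hFssmooth : ContDiffOn ℝ 2 (fun ξ => Fs ξ ^ 2) {0}ᶜ) {y : E} (hy : y ≠ 0) :
    legendreMap (fun ξ => Fs ξ ^ 2) (legendreMap (fun y => F y ^ 2) y) = y := by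
  have hC2 := hFsmooth.contDiffAt (isOpen_compl_singleton.mem_nhds hy)
  have hpsd : ∀ z ≠ 0, ∀ v, 0 ≤ fderiv ℝ (fderiv ℝ fun y => F y ^ 2) z v v := fun z hz v =>
    (eq_or_ne v 0).elim (fun hv => by simp [hv]) fun hv => (hpos z hz v hv).le
  have hℓ := legendreMap_sq_ne_zero hFpos hFhom hy (hC2.differentiableAt two_ne_zero)
  refine legendreMap_legendreMap (sq_homogeneous_of_homogeneous hFhom) hC2 (hpos y hy)
    ((hFssmooth.contDiffAt (isOpen_compl_singleton.mem_nhds hℓ)).differentiableAt two_ne_zero) ?_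
  filter_upwards [isOpen_compl_singleton.mem_nhds hy] with x hx
  simp only [Function.comp_apply, hFs (legendreMap _ x),
    ciSup_inner_legendreMap_div hFpos hFhom hFsmooth hpsd hx]

theorem leftInverse_fderiv_legendreMap (hFpos : ∀ y, y ≠ 0 → 0 < F y)
    (hFhom : ∀ s : ℝ, 0 ≤ s → ∀ y, F (s • y) = s * F y)
    (hFsmooth : ContDiffOn ℝ 2 (fun y => F y ^ 2) {0}ᶜ)
    (hpos : ∀ z ≠ 0, ∀ v ≠ 0, 0 < fderiv ℝ (fderiv ℝ fun y => F y ^ 2) z v v)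
    (hFs : ∀ ξ, Fs ξ = ⨆ y : {y : E // y ≠ 0}, ⟪ξ, (y : E)⟫ / F y)
    (hFssmooth : ContDiffOn ℝ 2 (fun ξ => Fs ξ ^ 2) {0}ᶜ) {y : E} (hy : y ≠ 0) :
    Function.LeftInverse
      (fderiv ℝ (legendreMap fun ξ => Fs ξ ^ 2) (legendreMap (fun y => F y ^ 2) y))
      (fderiv ℝ (legendreMap fun y => F y ^ 2) y) := by
  have hC2 := hFsmooth.contDiffAt (isOpen_compl_singleton.mem_nhds hy)
  have hℓ := legendreMap_sq_ne_zero hFpos hFhom hy (hC2.differentiableAt two_ne_zero)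
  have hC2s := hFssmooth.contDiffAt (isOpen_compl_singleton.mem_nhds hℓ)
  refine HasFDerivAt.leftInverse_of_eventually_leftInverse
    (hasFDerivAt_legendreMap hC2.differentiableAt_fderiv).differentiableAt.hasFDerivAt
    (hasFDerivAt_legendreMap hC2s.differentiableAt_fderiv).differentiableAt.hasFDerivAt ?_
  filter_upwards [isOpen_compl_singleton.mem_nhds hy] with x hx
  exact legendreMap_dual_legendreMap hFpos hFhom hFsmooth hpos hFs hFssmooth hx

theorem exists_leftInverse_fderiv_legendreMap (hFcont : Continuous F)
    (hFpos : ∀ y, y ≠ 0 → 0 < F y) (hFhom : ∀ s : ℝ, 0 ≤ s → ∀ y, F (s • y) = s * F y)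
    (hFsmooth : ContDiffOn ℝ 2 (fun y => F y ^ 2) {0}ᶜ)
    (hpos : ∀ z ≠ 0, ∀ v ≠ 0, 0 < fderiv ℝ (fderiv ℝ fun y => F y ^ 2) z v v)
    (hFs : ∀ ξ, Fs ξ = ⨆ y : {y : E // y ≠ 0}, ⟪ξ, (y : E)⟫ / F y)
    (hFssmooth : ContDiffOn ℝ 2 (fun ξ => Fs ξ ^ 2) {0}ᶜ) {ξ : E} (hξ : ξ ≠ 0) :
    ∃ X ≠ 0, Function.LeftInverse (fderiv ℝ (legendreMap fun y => F y ^ 2) X)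
      (fderiv ℝ (legendreMap fun ξ => Fs ξ ^ 2) ξ) := by
  have hC2 : ∀ z ≠ 0, ContDiffAt ℝ 2 (fun y => F y ^ 2) z := fun z hz =>
    hFsmooth.contDiffAt (isOpen_compl_singleton.mem_nhds hz)
  obtain ⟨X, hX, rfl⟩ := exists_legendreMap_eq hFcont hFpos hFhom
    (fun y hy => (hC2 y hy).differentiableAt two_ne_zero) hξ
  refine ⟨X, hX, (leftInverse_fderiv_legendreMap hFpos hFhom hFsmooth hpos hFs hFssmooth hX
    ).rightInverse_of_surjective
    (ContinuousLinearMap.surjective_of_inner_apply_self_pos fun v hv => ?_)⟩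
  rw [inner_fderiv_legendreMap_apply (hC2 X hX).differentiableAt_fderiv]
  linarith [hpos X hX v hv]

end LegendreDuality

section UniformityConstant

def uniformityRatios {E : Type*} [Zero E] (g : E → E → E → ℝ) : Set ℝ :=
  {r | ∃ X Y Z : E, X ≠ 0 ∧ Y ≠ 0 ∧ Z ≠ 0 ∧ r = g X Y Y / g Z Y Y}

theorem sSup_uniformityRatios_nonneg {E : Type*} [Zero E] {g : E → E → E → ℝ}
    (hgpos : ∀ z ≠ 0, ∀ v ≠ 0, 0 < g z v v) :
    0 ≤ sSup (uniformityRatios g) :=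
  Real.sSup_nonneg fun _ ⟨X, Y, Z, hX, hY, hZ, hr⟩ =>
    hr ▸ (div_pos (hgpos X hX Y hY) (hgpos Z hZ Y hY)).le

variable {E : Type*} [NormedAddCommGroup E] [InnerProductSpace ℝ E]
  {g gs : E → E → E → ℝ} {H Hs : E → E →L[ℝ] E}

theorem le_sSup_uniformityRatios
    (hgH : ∀ z ≠ 0, ∀ v, g z v v = ⟪H z v, v⟫) (hgsHs : ∀ z ≠ 0, ∀ v, gs z v v = ⟪Hs z v, v⟫)
    (hgpos : ∀ z ≠ 0, ∀ v ≠ 0, 0 < g z v v) (hgspos : ∀ z ≠ 0, ∀ v ≠ 0, 0 < gs z v v)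
    (hsymm : ∀ z ≠ 0, ∀ v w, ⟪H z v, w⟫ = ⟪H z w, v⟫)
    (hinv : ∀ ξ ≠ 0, ∃ X ≠ 0, Function.LeftInverse (H X) (Hs ξ))
    (hbdd : BddAbove (uniformityRatios g)) {r : ℝ} (hr : r ∈ uniformityRatios gs) :
    r ≤ sSup (uniformityRatios g) := by
  obtain ⟨ξ, ζ, η, hξ, hζ, hη, rfl⟩ := hr
  obtain ⟨X, hX, hXξ⟩ := hinv ξ hξ
  obtain ⟨Z, hZ, hZη⟩ := hinv η hη
  set Y := Hs ξ ζ
  have hXY : H X Y = ζ := hXξ ζ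
  have hY : Y ≠ 0 := fun h => hζ (by rw [← hXY, h, map_zero])
  have hgX : ⟪ζ, Y⟫ = g X Y Y := by rw [hgH X hX, hXY]
  have hgsX : gs ξ ζ ζ = g X Y Y := by rw [hgsHs ξ hξ, real_inner_comm, hgX]
  have hpsd : ∀ v, 0 ≤ ⟪H Z v, v⟫ := fun v =>
    (eq_or_ne v 0).elim (fun hv => by simp [hv]) fun hv => hgH Z hZ v ▸ (hgpos Z hZ v hv).le
  have hcs := inner_sq_le_of_leftInverse (hsymm Z hZ) hpsd hZη ζ Y
  rw [hgX, ← hgH Z hZ, ← hgsHs η hη] at hcs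
  have hle : gs ξ ζ ζ / gs η ζ ζ ≤ g Z Y Y / g X Y Y := by
    rw [div_le_div_iff₀ (hgspos η hη ζ hζ) (hgpos X hX Y hY), hgsX]
    nlinarith
  exact hle.trans (le_csSup hbdd ⟨Z, Y, X, hZ, hY, hX, rfl⟩)

theorem sSup_uniformityRatios_eq
    (hgH : ∀ z ≠ 0, ∀ v, g z v v = ⟪H z v, v⟫) (hgsHs : ∀ z ≠ 0, ∀ v, gs z v v = ⟪Hs z v, v⟫)
    (hgpos : ∀ z ≠ 0, ∀ v ≠ 0, 0 < g z v v) (hgspos : ∀ z ≠ 0, ∀ v ≠ 0, 0 < gs z v v)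
    (hsymm : ∀ z ≠ 0, ∀ v w, ⟪H z v, w⟫ = ⟪H z w, v⟫)
    (hsymms : ∀ z ≠ 0, ∀ v w, ⟪Hs z v, w⟫ = ⟪Hs z w, v⟫)
    (hinv : ∀ ξ ≠ 0, ∃ X ≠ 0, Function.LeftInverse (H X) (Hs ξ))
    (hinvs : ∀ X ≠ 0, ∃ ξ ≠ 0, Function.LeftInverse (Hs ξ) (H X))
    (hbdd : BddAbove (uniformityRatios g)) :
    sSup (uniformityRatios gs) = sSup (uniformityRatios g) := by
  have hle := fun r => le_sSup_uniformityRatios (r := r) hgH hgsHs hgpos hgspos hsymm hinv hbdd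
  have hge := fun r => le_sSup_uniformityRatios (r := r) hgsHs hgH hgspos hgpos hsymms hinvs
    ⟨_, fun r => hle r⟩
  exact le_antisymm (Real.sSup_le (fun r => hle r) (sSup_uniformityRatios_nonneg hgpos))
    (Real.sSup_le (fun r => hge r) (sSup_uniformityRatios_nonneg hgspos))

end UniformityConstant

theorem stmt_1_general (n : ℕ)
    (F : EuclideanSpace ℝ (Fin n) → ℝ)
    (hFcont : Continuous F)
    (hFpos : ∀ y : EuclideanSpace ℝ (Fin n), y ≠ 0 → 0 < F y)
    (hFhom : ∀ s : ℝ, 0 ≤ s → ∀ y : EuclideanSpace ℝ (Fin n), F (s • y) = s * F y)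
    (hFsmooth : ContDiffOn ℝ 2 (fun y => (F y) ^ 2) {(0 : EuclideanSpace ℝ (Fin n))}ᶜ)
    (g : EuclideanSpace ℝ (Fin n) → EuclideanSpace ℝ (Fin n) → EuclideanSpace ℝ (Fin n) → ℝ)
    (hg : ∀ z, z ≠ 0 → ∀ v w : EuclideanSpace ℝ (Fin n),
      g z v w = (1 / 2) * fderiv ℝ (fun y => fderiv ℝ (fun y' => (F y') ^ 2) y v) z w)
    (hgpos : ∀ z, z ≠ 0 → ∀ v : EuclideanSpace ℝ (Fin n), v ≠ 0 → 0 < g z v v)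
    (Fs : EuclideanSpace ℝ (Fin n) → ℝ)
    (hFs : ∀ ξ : EuclideanSpace ℝ (Fin n),
      Fs ξ = ⨆ y : {y : EuclideanSpace ℝ (Fin n) // y ≠ 0}, ⟪ξ, (y : EuclideanSpace ℝ (Fin n))⟫ / F y)
    (hFssmooth : ContDiffOn ℝ 2 (fun ξ => (Fs ξ) ^ 2) {(0 : EuclideanSpace ℝ (Fin n))}ᶜ)
    (gs : EuclideanSpace ℝ (Fin n) → EuclideanSpace ℝ (Fin n) → EuclideanSpace ℝ (Fin n) → ℝ)
    (hgs : ∀ η, η ≠ 0 → ∀ v w : EuclideanSpace ℝ (Fin n),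
      gs η v w = (1 / 2) * fderiv ℝ (fun ξ => fderiv ℝ (fun ξ' => (Fs ξ') ^ 2) ξ v) η w)
    (hgspos : ∀ η, η ≠ 0 → ∀ ζ : EuclideanSpace ℝ (Fin n), ζ ≠ 0 → 0 < gs η ζ ζ)
    (hbdd : BddAbove {r : ℝ | ∃ X Y Z : EuclideanSpace ℝ (Fin n),
      X ≠ 0 ∧ Y ≠ 0 ∧ Z ≠ 0 ∧ r = g X Y Y / g Z Y Y}) :
    sSup {r : ℝ | ∃ ξ η ζ : EuclideanSpace ℝ (Fin n),
        ξ ≠ 0 ∧ η ≠ 0 ∧ ζ ≠ 0 ∧ r = gs ξ ζ ζ / gs η ζ ζ} =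
      sSup {r : ℝ | ∃ X Y Z : EuclideanSpace ℝ (Fin n),
        X ≠ 0 ∧ Y ≠ 0 ∧ Z ≠ 0 ∧ r = g X Y Y / g Z Y Y} := by
  have hC2 : ∀ z ≠ 0, ContDiffAt ℝ 2 (fun y => F y ^ 2) z := fun z hz =>
    hFsmooth.contDiffAt (isOpen_compl_singleton.mem_nhds hz)
  have hC2s : ∀ ξ ≠ 0, ContDiffAt ℝ 2 (fun ξ => Fs ξ ^ 2) ξ := fun ξ hξ =>
    hFssmooth.contDiffAt (isOpen_compl_singleton.mem_nhds hξ)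
  have hgH : ∀ z ≠ 0, ∀ v, g z v v = ⟪fderiv ℝ (legendreMap fun y => F y ^ 2) z v, v⟫ :=
    fun z hz v => (hg z hz v v).trans
      (half_fderiv_fderiv_apply_eq_inner (hC2 z hz).differentiableAt_fderiv v)
  have hgsH : ∀ η ≠ 0, ∀ v, gs η v v = ⟪fderiv ℝ (legendreMap fun ξ => Fs ξ ^ 2) η v, v⟫ :=
    fun η hη v => (hgs η hη v v).trans
      (half_fderiv_fderiv_apply_eq_inner (hC2s η hη).differentiableAt_fderiv v)
  have hpos : ∀ z ≠ 0, ∀ v ≠ 0, 0 < fderiv ℝ (fderiv ℝ fun y => F y ^ 2) z v v :=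
    fun z hz v hv => by
      have := hgpos z hz v hv
      rw [hgH z hz, inner_fderiv_legendreMap_apply (hC2 z hz).differentiableAt_fderiv] at this
      linarith
  convert sSup_uniformityRatios_eq hgH hgsH hgpos hgspos
    (fun z hz => inner_fderiv_legendreMap_comm (hC2 z hz))
    (fun η hη => inner_fderiv_legendreMap_comm (hC2s η hη))
    (fun ξ hξ => exists_leftInverse_fderiv_legendreMap hFcont hFpos hFhom hFsmooth hpos hFs
      hFssmooth hξ)
    (fun X hX => ⟨_, legendreMap_sq_ne_zero hFpos hFhom hX
      ((hC2 X hX).differentiableAt two_ne_zero),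
      leftInverse_fderiv_legendreMap hFpos hFhom hFsmooth hpos hFs hFssmooth hX⟩) hbdd using 2
  · ext r
    exact ⟨fun ⟨ξ, η, ζ, hξ, hη, hζ, hr⟩ => ⟨ξ, ζ, η, hξ, hζ, hη, hr⟩,
      fun ⟨ξ, ζ, η, hξ, hζ, hη, hr⟩ => ⟨ξ, η, ζ, hξ, hη, hζ, hr⟩⟩
  · rfl

/-- **The dual uniformity constant equals the uniformity constant** (Step 1 in the proof of
Theorem 3.4).  `F` is a Minkowski norm on `ℝⁿ` with positive definite fundamental form `g`,
`Fs` its dual norm with fundamental form `gs`, and the uniformity constant of `F`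
(the supremum of `g_X(Y,Y)/g_Z(Y,Y)`) is finite (i.e. the set of ratios is bounded above).
Then `Λ_{F*} = Λ_F`. -/
theorem stmt_1 (n : ℕ) (hn : 1 ≤ n)
    (F : EuclideanSpace ℝ (Fin n) → ℝ)
    (hFcont : Continuous F)
    (hFpos : ∀ y : EuclideanSpace ℝ (Fin n), y ≠ 0 → 0 < F y)
    (hFhom : ∀ s : ℝ, 0 ≤ s → ∀ y : EuclideanSpace ℝ (Fin n), F (s • y) = s * F y)
    (hFsmooth : ContDiffOn ℝ 2 (fun y => (F y) ^ 2) {(0 : EuclideanSpace ℝ (Fin n))}ᶜ)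
    (g : EuclideanSpace ℝ (Fin n) → EuclideanSpace ℝ (Fin n) → EuclideanSpace ℝ (Fin n) → ℝ)
    (hg : ∀ z, z ≠ 0 → ∀ v w : EuclideanSpace ℝ (Fin n),
      g z v w = (1 / 2) * fderiv ℝ (fun y => fderiv ℝ (fun y' => (F y') ^ 2) y v) z w)
    (hgpos : ∀ z, z ≠ 0 → ∀ v : EuclideanSpace ℝ (Fin n), v ≠ 0 → 0 < g z v v)
    (Fs : EuclideanSpace ℝ (Fin n) → ℝ)
    (hFs : ∀ ξ : EuclideanSpace ℝ (Fin n),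
      Fs ξ = ⨆ y : {y : EuclideanSpace ℝ (Fin n) // y ≠ 0}, ⟪ξ, (y : EuclideanSpace ℝ (Fin n))⟫ / F y)
    (hFssmooth : ContDiffOn ℝ 2 (fun ξ => (Fs ξ) ^ 2) {(0 : EuclideanSpace ℝ (Fin n))}ᶜ)
    (gs : EuclideanSpace ℝ (Fin n) → EuclideanSpace ℝ (Fin n) → EuclideanSpace ℝ (Fin n) → ℝ)
    (hgs : ∀ η, η ≠ 0 → ∀ v w : EuclideanSpace ℝ (Fin n),
      gs η v w = (1 / 2) * fderiv ℝ (fun ξ => fderiv ℝ (fun ξ' => (Fs ξ') ^ 2) ξ v) η w)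
    (hgspos : ∀ η, η ≠ 0 → ∀ ζ : EuclideanSpace ℝ (Fin n), ζ ≠ 0 → 0 < gs η ζ ζ)
    (hbdd : BddAbove {r : ℝ | ∃ X Y Z : EuclideanSpace ℝ (Fin n),
      X ≠ 0 ∧ Y ≠ 0 ∧ Z ≠ 0 ∧ r = g X Y Y / g Z Y Y}) :
    sSup {r : ℝ | ∃ ξ η ζ : EuclideanSpace ℝ (Fin n),
        ξ ≠ 0 ∧ η ≠ 0 ∧ ζ ≠ 0 ∧ r = gs ξ ζ ζ / gs η ζ ζ} =
      sSup {r : ℝ | ∃ X Y Z : EuclideanSpace ℝ (Fin n),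
        X ≠ 0 ∧ Y ≠ 0 ∧ Z ≠ 0 ∧ r = g X Y Y / g Z Y Y} :=
  stmt_1_general n F hFcont hFpos hFhom hFsmooth g hg hgpos Fs hFs hFssmooth gs hgs hgspos hbdd
end

section
/- Let n ≥ 1 and 0 ≤ b < 1, and define F*(ξ) := ‖ξ‖ + b·ξₙ for ξ ∈ ℝⁿ, where ‖·‖ is the Euclidean norm and ξₙ is the last coordinate. For ξ ≠ 0 set g*_ξ(ξ,η) := F*(ξ)·(⟨ξ,η⟩/‖ξ‖ + b·ηₙ), and set g*_0(0,η) := 0. Then for all ξ, η ∈ ℝⁿ: F*(ξ+η)² ≥ F*(ξ)² + 2·g*_ξ(ξ,η) + ((1−b)/(1+b))²·F*(η)². -/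
open scoped RealInnerProductSpace Classical

lemma coord_abs_le_norm {n : ℕ} (x : EuclideanSpace ℝ (Fin n)) (i : Fin n) :
    |x i| ≤ ‖x‖ := by
  have h := abs_real_inner_le_norm (EuclideanSpace.single i (1 : ℝ)) x
  rwa [EuclideanSpace.inner_single_left, EuclideanSpace.norm_single, norm_one, one_mul,
    starRingEnd_apply, star_one, one_mul] at h

set_option maxHeartbeats 1000000 in
lemma key (b A B C I u v : ℝ) (hb0 : 0 ≤ b) (hb1 : b ≤ 1) (hA : 0 < A) (hB : 0 ≤ B)
    (hC2 : C ^ 2 = A ^ 2 + 2 * I + B ^ 2) (hv1 : -A ≤ v)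
    (hu1 : -B ≤ u) (hu2 : u ≤ B) (ht1 : C - A ≤ B) (ht2 : -B ≤ C - A) :
    (A + b * v) ^ 2 + 2 * ((A + b * v) * (I / A + b * u)) + ((1 - b) / (1 + b)) ^ 2 * (B + b * u) ^ 2
      ≤ (C + b * (v + u)) ^ 2 := by
  have hI : I = (C ^ 2 - A ^ 2 - B ^ 2) / 2 := by linarith
  have hA' : A ≠ 0 := ne_of_gt hA
  have hb : (1 + b) ≠ 0 := by linarith
  have hident : ((1 + b) ^ 2 * A) *
      ((C + b * (v + u)) ^ 2 -
        ((A + b * v) ^ 2 + 2 * ((A + b * v) * (I / A + b * u)) +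
          ((1 - b) / (1 + b)) ^ 2 * (B + b * u) ^ 2)) =
      2 * b * ((1 + b) ^ 2 * (A + v) * (B ^ 2 - (C - A) ^ 2) / 2 +
        A * (1 + b) ^ 2 * ((C - A) + u) ^ 2 / 2 +
        A * (1 - b) * (1 + 3 * b) * (B ^ 2 - u ^ 2) / 2 +
        A * (1 - b) ^ 2 * B * (B - u)) := by
    rw [hI]; field_simp; ring
  have hE : 0 ≤ 2 * b * ((1 + b) ^ 2 * (A + v) * (B ^ 2 - (C - A) ^ 2) / 2 +
        A * (1 + b) ^ 2 * ((C - A) + u) ^ 2 / 2 +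
        A * (1 - b) * (1 + 3 * b) * (B ^ 2 - u ^ 2) / 2 +
        A * (1 - b) ^ 2 * B * (B - u)) := by
    have h1 : 0 ≤ (A + v) := by linarith
    have h2 : 0 ≤ B ^ 2 - (C - A) ^ 2 := by nlinarith
    have h3 : 0 ≤ B ^ 2 - u ^ 2 := by nlinarith
    have h4 : 0 ≤ B - u := by linarith
    have h5 : (0:ℝ) ≤ (1 + b) ^ 2 := sq_nonneg _
    have h6 : (0:ℝ) ≤ 1 - b := by linarith
    have h7 : (0:ℝ) ≤ 1 + 3 * b := by linarith
    have h8 : (0:ℝ) ≤ ((C - A) + u) ^ 2 := sq_nonneg _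
    have h9 : (0:ℝ) ≤ (1 - b) ^ 2 := sq_nonneg _
    have t1 : (0:ℝ) ≤ (1 + b) ^ 2 * (A + v) * (B ^ 2 - (C - A) ^ 2) / 2 := by
      have := mul_nonneg (mul_nonneg h5 h1) h2; linarith
    have t2 : (0:ℝ) ≤ A * (1 + b) ^ 2 * ((C - A) + u) ^ 2 / 2 := by
      have := mul_nonneg (mul_nonneg hA.le h5) h8; linarith
    have t3 : (0:ℝ) ≤ A * (1 - b) * (1 + 3 * b) * (B ^ 2 - u ^ 2) / 2 := by
      have := mul_nonneg (mul_nonneg (mul_nonneg hA.le h6) h7) h3; linarith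
    have t4 : (0:ℝ) ≤ A * (1 - b) ^ 2 * B * (B - u) := by
      have := mul_nonneg (mul_nonneg (mul_nonneg hA.le h9) hB) h4; linarith
    have hb2 : (0:ℝ) ≤ 2 * b := by linarith
    exact mul_nonneg hb2 (by linarith)
  have hpos : (0:ℝ) < (1 + b) ^ 2 * A := by positivity
  rw [← sub_nonneg]
  by_contra hlt
  push_neg at hlt
  nlinarith [hident, hE, hpos, hlt]

/-- **Example 3.1**: the refined Cauchy–Schwarz inequality for the Randers-type Minkowski
norm `F*(ξ) = ‖ξ‖ + b ξₙ` on `ℝⁿ`, whose uniformity constant is `((1+b)/(1−b))²`. -/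
theorem stmt_2 (n : ℕ) (hn : 1 ≤ n) (b : ℝ) (hb0 : 0 ≤ b) (hb1 : b < 1)
    (Fs : EuclideanSpace ℝ (Fin n) → ℝ)
    (hFs : ∀ ξ : EuclideanSpace ℝ (Fin n), Fs ξ = ‖ξ‖ + b * ξ ⟨n - 1, by omega⟩)
    (gs : EuclideanSpace ℝ (Fin n) → EuclideanSpace ℝ (Fin n) → ℝ)
    (hgs : ∀ ξ η : EuclideanSpace ℝ (Fin n),
      gs ξ η = if ξ = 0 then 0 else
        Fs ξ * (⟪ξ, η⟫ / ‖ξ‖ + b * η ⟨n - 1, by omega⟩)) :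
    ∀ ξ η : EuclideanSpace ℝ (Fin n),
      (Fs (ξ + η)) ^ 2 ≥ (Fs ξ) ^ 2 + 2 * gs ξ η + ((1 - b) / (1 + b)) ^ 2 * (Fs η) ^ 2 := by
  intro ξ η
  set i : Fin n := ⟨n - 1, by omega⟩
  by_cases hξ : ξ = 0
  · subst hξ
    have h0 : (0 : EuclideanSpace ℝ (Fin n)) i = 0 := rfl
    rw [hgs, if_pos rfl, hFs, hFs, hFs, zero_add]
    rw [h0, norm_zero]
    have hk : ((1 - b) / (1 + b)) ^ 2 ≤ 1 := by
      rw [div_pow, div_le_one (by positivity)]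
      nlinarith
    have hk0 : (0:ℝ) ≤ ((1 - b) / (1 + b)) ^ 2 := sq_nonneg _
    nlinarith [sq_nonneg (‖η‖ + b * η i)]
  · have hA : (0:ℝ) < ‖ξ‖ := norm_pos_iff.mpr hξ
    rw [hgs, if_neg hξ, hFs, hFs, hFs]
    have hC2 : ‖ξ + η‖ ^ 2 = ‖ξ‖ ^ 2 + 2 * ⟪ξ, η⟫ + ‖η‖ ^ 2 := norm_add_sq_real ξ η
    have hv := abs_le.mp (coord_abs_le_norm ξ i)
    have hu := abs_le.mp (coord_abs_le_norm η i)
    have ht1 : ‖ξ + η‖ - ‖ξ‖ ≤ ‖η‖ := by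
      have := norm_add_le ξ η; linarith
    have ht2 : -‖η‖ ≤ ‖ξ + η‖ - ‖ξ‖ := by
      have h := norm_add_le (ξ + η) (-η)
      simp only [add_neg_cancel_right, norm_neg] at h
      linarith
    have hkey := key b ‖ξ‖ ‖η‖ ‖ξ + η‖ ⟪ξ, η⟫ (η i) (ξ i) hb0 hb1.le hA (norm_nonneg η)
      hC2 hv.1 hu.1 hu.2 ht1 ht2
    have hadd : (ξ + η) i = ξ i + η i := rfl
    rw [hadd]
    have hFsξ : ‖ξ‖ + b * ξ i ≠ 0 := by nlinarith [hv.1, hv.2]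
    exact hkey
end

section
/- Let 0 ≤ b < 1 and let s, c, l be real numbers with s ∈ [−1,1], c ∈ [−1,1], and |l| ≤ b. Then (1−s²)·(1+b·c) + (s+l)² ≥ (1−b)². -/
/-- The elementary key estimate in Case 3 of Example 3.1:
for `0 ≤ b < 1`, `s, c ∈ [−1,1]` and `|l| ≤ b`,
`(1−s²)(1+bc) + (s+l)² ≥ (1−b)²`. -/
theorem stmt_3 (b s c l : ℝ) (hb0 : 0 ≤ b) (hb1 : b < 1)
    (hs : s ∈ Set.Icc (-1 : ℝ) 1) (hc : c ∈ Set.Icc (-1 : ℝ) 1) (hl : |l| ≤ b) :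
    (1 - s ^ 2) * (1 + b * c) + (s + l) ^ 2 ≥ (1 - b) ^ 2 := by
  obtain ⟨hs1, hs2⟩ := hs
  obtain ⟨hc1, hc2⟩ := hc
  rw [abs_le] at hl
  obtain ⟨hl1, hl2⟩ := hl
  have h1 : (1 - s ^ 2) * (1 + b * c) ≥ (1 - s ^ 2) * (1 - b) := by
    have : (0:ℝ) ≤ 1 - s ^ 2 := by nlinarith
    nlinarith [mul_nonneg this (mul_nonneg hb0 (by linarith : (0:ℝ) ≤ c + 1))]
  rcases abs_le.mp (le_refl |s|) with _
  rcases le_total s 0 with hsn | hsp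
  · rcases le_total (-s) b with h | h
    · -- |s| ≤ b: (1-s²)(1-b) ≥ (1-b)²(1+b)
      have hsb : s ^ 2 ≤ b ^ 2 := by nlinarith
      nlinarith [sq_nonneg (s + l),
        mul_nonneg (sub_nonneg.2 hb1.le) (by nlinarith : (0:ℝ) ≤ b - s ^ 2)]
    · -- s ≤ -b: s+l ≤ s+b ≤ 0 so (s+l)² ≥ (s+b)²
      have h2 : (s + l) ^ 2 ≥ (s + b) ^ 2 := by nlinarith
      nlinarith [mul_nonneg hb0 (sq_nonneg (s + 1))]
  · rcases le_total s b with h | h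
    · have hsb : s ^ 2 ≤ b ^ 2 := by nlinarith
      nlinarith [sq_nonneg (s + l),
        mul_nonneg (sub_nonneg.2 hb1.le) (by nlinarith : (0:ℝ) ≤ b - s ^ 2)]
    · have h2 : (s + l) ^ 2 ≥ (s - b) ^ 2 := by nlinarith
      nlinarith [mul_nonneg hb0 (sq_nonneg (s - 1))]
end

section
/- Let n ≥ 1 and β ∈ ℝ with −2 < β < n−4. Then for every smooth compactly supported u : ℝⁿ → ℝ: ∫_{ℝⁿ} ‖x‖^{−(β+2)} · Δ(u²)(x) dx = (β+2)·(β+4−n) · ∫_{ℝⁿ} u(x)² · ‖x‖^{−(β+4)} dx, where Δ = Σᵢ ∂²/∂xᵢ² is the Euclidean Laplacian, ‖·‖ the Euclidean norm, and the integrals are with respect to Lebesgue measure. -/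
open MeasureTheory

/-- The Euclidean Laplacian `Δu = Σᵢ ∂²u/∂xᵢ²` on `ℝⁿ`. -/
noncomputable def eLaplacian (n : ℕ) (u : EuclideanSpace ℝ (Fin n) → ℝ)
    (x : EuclideanSpace ℝ (Fin n)) : ℝ :=
  ∑ i : Fin n,
    fderiv ℝ (fun y => fderiv ℝ u y (EuclideanSpace.single i 1)) x (EuclideanSpace.single i 1)



open Metric Set Filter Topology Real
open scoped ENNReal

section RellichAux

variable {n : ℕ}

local notation "𝔼" => EuclideanSpace ℝ (Fin n)

lemma myIntegrable_mul_right {f g : 𝔼 → ℝ}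
    (hf : Continuous f) (hg : Continuous g) (h : HasCompactSupport g) :
    Integrable (fun x => f x * g x) := by
  apply Continuous.integrable_of_hasCompactSupport (hf.mul hg)
  exact h.mul_left

lemma myContDiff_dcoord {f : 𝔼 → ℝ} (hf : ContDiff ℝ (⊤ : ℕ∞) f) (v : 𝔼) :
    ContDiff ℝ (⊤ : ℕ∞) (fun x => fderiv ℝ f x v) :=
  (hf.fderiv_right (by simp)).clm_apply contDiff_const

lemma myHCS_dcoord {f : 𝔼 → ℝ} (hf : HasCompactSupport f) (v : 𝔼) :
    HasCompactSupport (fun x => fderiv ℝ f x v) :=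
  (hf.fderiv (𝕜 := ℝ)).comp_left (g := fun L : 𝔼 →L[ℝ] ℝ => L v) rfl

lemma myGreen {w v : 𝔼 → ℝ} (hw : ContDiff ℝ (⊤ : ℕ∞) w) (hv : ContDiff ℝ (⊤ : ℕ∞) v)
    (hvs : HasCompactSupport v) :
    ∫ x, w x * eLaplacian n v x = ∫ x, eLaplacian n w x * v x := by
  have key : ∀ i : Fin n,
      (∫ x, w x *
        fderiv ℝ (fun y => fderiv ℝ v y (EuclideanSpace.single i 1)) x (EuclideanSpace.single i 1))
      = ∫ x, fderiv ℝ (fun y => fderiv ℝ w y (EuclideanSpace.single i 1)) x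
          (EuclideanSpace.single i 1) * v x := by
    intro i
    set e : 𝔼 := EuclideanSpace.single i 1 with he
    have hvi : ContDiff ℝ (⊤ : ℕ∞) (fun y => fderiv ℝ v y e) := myContDiff_dcoord hv e
    have hwi : ContDiff ℝ (⊤ : ℕ∞) (fun y => fderiv ℝ w y e) := myContDiff_dcoord hw e
    have hvis : HasCompactSupport (fun y => fderiv ℝ v y e) := myHCS_dcoord hvs e
    have hviis : HasCompactSupport
        (fun y => fderiv ℝ (fun z => fderiv ℝ v z e) y e) := myHCS_dcoord hvis e
    have step1 :
        (∫ x, w x * fderiv ℝ (fun y => fderiv ℝ v y e) x e)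
          = - ∫ x, fderiv ℝ w x e * fderiv ℝ v x e := by
      exact integral_mul_fderiv_eq_neg_fderiv_mul_of_integrable
        (myIntegrable_mul_right ((myContDiff_dcoord hw e).continuous) hvi.continuous hvis)
        (myIntegrable_mul_right hw.continuous
          ((myContDiff_dcoord hvi e).continuous) hviis)
        (myIntegrable_mul_right hw.continuous hvi.continuous hvis)
        (fun x _ => hw.differentiable (by simp) x) (fun x _ => hvi.differentiable (by simp) x)
    have step2 :
        (∫ x, (fun y => fderiv ℝ w y e) x * fderiv ℝ v x e)
          = - ∫ x, fderiv ℝ (fun y => fderiv ℝ w y e) x e * v x := by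
      exact integral_mul_fderiv_eq_neg_fderiv_mul_of_integrable
        (myIntegrable_mul_right ((myContDiff_dcoord hwi e).continuous) hv.continuous hvs)
        (myIntegrable_mul_right hwi.continuous hvi.continuous hvis)
        (myIntegrable_mul_right hwi.continuous hv.continuous hvs)
        (fun x _ => hwi.differentiable (by simp) x) (fun x _ => hv.differentiable (by simp) x)
    simp only at step2
    rw [step1, step2, neg_neg]
  have hIl : ∀ i : Fin n, Integrable (fun x => w x *
      fderiv ℝ (fun y => fderiv ℝ v y (EuclideanSpace.single i 1)) x
        (EuclideanSpace.single i 1)) := fun i =>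
    myIntegrable_mul_right hw.continuous
      ((myContDiff_dcoord (myContDiff_dcoord hv _) _).continuous)
      (myHCS_dcoord (myHCS_dcoord hvs _) _)
  have hIr : ∀ i : Fin n, Integrable (fun x =>
      fderiv ℝ (fun y => fderiv ℝ w y (EuclideanSpace.single i 1)) x
        (EuclideanSpace.single i 1) * v x) := fun i =>
    myIntegrable_mul_right
      ((myContDiff_dcoord (myContDiff_dcoord hw _) _).continuous)
      hv.continuous hvs
  calc ∫ x, w x * eLaplacian n v x
      = ∫ x, ∑ i : Fin n, w x *
          fderiv ℝ (fun y => fderiv ℝ v y (EuclideanSpace.single i 1)) x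
            (EuclideanSpace.single i 1) := by
        simp only [eLaplacian, Finset.mul_sum]
    _ = ∑ i : Fin n, ∫ x, w x *
          fderiv ℝ (fun y => fderiv ℝ v y (EuclideanSpace.single i 1)) x
            (EuclideanSpace.single i 1) := integral_finset_sum _ (fun i _ => hIl i)
    _ = ∑ i : Fin n, ∫ x, fderiv ℝ (fun y => fderiv ℝ w y (EuclideanSpace.single i 1)) x
            (EuclideanSpace.single i 1) * v x := by
        exact Finset.sum_congr rfl fun i _ => key i
    _ = ∫ x, ∑ i : Fin n, fderiv ℝ (fun y => fderiv ℝ w y (EuclideanSpace.single i 1)) x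
            (EuclideanSpace.single i 1) * v x := (integral_finset_sum _ (fun i _ => hIr i)).symm
    _ = ∫ x, eLaplacian n w x * v x := by
        simp only [eLaplacian, Finset.sum_mul]

lemma myIntegrableOn_rpow_ball (hn : 1 ≤ n) {s : ℝ} (hs : 0 < s) (hsn : s < n) (R : ℝ) :
    IntegrableOn (fun x : 𝔼 => ‖x‖ ^ (-s)) (closedBall 0 R) volume := by
  haveI : Nonempty (Fin n) := ⟨⟨0, hn⟩⟩
  have hmeas : Measurable (fun x : 𝔼 => ‖x‖ ^ (-s)) := by fun_prop
  rcases le_or_gt R 0 with hR | hR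
  · have hz : volume.restrict (closedBall (0:𝔼) R) = 0 := by
      rcases lt_or_eq_of_le hR with h | h
      · rw [closedBall_eq_empty.2 h]; simp
      · subst h
        rw [closedBall_zero]
        refine Measure.restrict_eq_zero.2 ?_
        simp
    show Integrable _ _
    rw [hz]
    exact integrable_zero_measure
  constructor
  · exact hmeas.aestronglyMeasurable.restrict
  · rw [hasFiniteIntegral_iff_ofReal
      (Eventually.of_forall fun x => rpow_nonneg (norm_nonneg _) _)]
    rw [lintegral_eq_lintegral_meas_le _
      (Eventually.of_forall fun x => rpow_nonneg (norm_nonneg _) _)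
      hmeas.aemeasurable.restrict]
    set B : ℝ → ℝ≥0∞ := fun t => volume (closedBall (0:𝔼) (min R (t ^ (-s)⁻¹))) with hB
    have hsub : ∀ t ∈ Ioi (0:ℝ),
        (volume.restrict (closedBall (0:𝔼) R)) {a : 𝔼 | t ≤ ‖a‖ ^ (-s)} ≤ B t := by
      intro t ht
      rw [Measure.restrict_apply₀' measurableSet_closedBall.nullMeasurableSet]
      apply measure_mono
      rintro x ⟨hx1, hx2⟩
      simp only [mem_closedBall_zero_iff]
      rcases eq_or_ne x 0 with rfl | hx0
      · simp [le_min_iff, hR.le, Real.rpow_nonneg (le_of_lt ht)]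
      · have hxpos : 0 < ‖x‖ := norm_pos_iff.2 hx0
        have h2 : ‖x‖ ≤ t ^ (-s)⁻¹ :=
          (Real.le_rpow_inv_iff_of_neg hxpos ht (neg_lt_zero.2 hs)).2 hx1
        exact le_min (mem_closedBall_zero_iff.1 hx2) h2
    refine lt_of_le_of_lt (setLIntegral_mono' measurableSet_Ioi hsub) ?_
    set T : ℝ := R ^ (-s) with hT
    have hTpos : 0 < T := Real.rpow_pos_of_pos hR _
    calc ∫⁻ t in Ioi 0, B t
        ≤ ∫⁻ t in Ioc 0 T ∪ Ioi T, B t := lintegral_mono_set (by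
          intro t ht
          rcases le_or_gt t T with h | h
          · exact Or.inl ⟨ht, h⟩
          · exact Or.inr h)
      _ ≤ (∫⁻ t in Ioc 0 T, B t) + ∫⁻ t in Ioi T, B t := lintegral_union_le _ _ _
      _ < ⊤ := by
        refine ENNReal.add_lt_top.2 ⟨?_, ?_⟩
        · have hb : ∀ t ∈ Ioc (0:ℝ) T, B t ≤ volume (closedBall (0:𝔼) R) := fun t _ =>
            measure_mono (closedBall_subset_closedBall (min_le_left _ _))
          refine lt_of_le_of_lt (setLIntegral_mono' measurableSet_Ioc hb) ?_
          rw [setLIntegral_const]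
          exact ENNReal.mul_lt_top measure_closedBall_lt_top
            (by simp [Real.volume_Ioc, ENNReal.ofReal_lt_top])
        · have hb : ∀ t ∈ Ioi T, B t ≤
              ENNReal.ofReal (t ^ ((-s)⁻¹ * n)) * volume (ball (0:𝔼) 1) := by
            intro t ht
            have htpos : 0 < t := lt_trans hTpos ht
            have hrad : (0:ℝ) ≤ t ^ (-s)⁻¹ := (Real.rpow_pos_of_pos htpos _).le
            calc B t ≤ volume (closedBall (0:𝔼) (t ^ (-s)⁻¹)) :=
                  measure_mono (closedBall_subset_closedBall (min_le_right _ _))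
              _ = ENNReal.ofReal ((t ^ (-s)⁻¹) ^ (Module.finrank ℝ 𝔼)) * volume (ball (0:𝔼) 1) :=
                  Measure.addHaar_closedBall _ _ hrad
              _ = ENNReal.ofReal (t ^ ((-s)⁻¹ * n)) * volume (ball (0:𝔼) 1) := by
                  rw [finrank_euclideanSpace_fin, ← Real.rpow_natCast (t ^ (-s)⁻¹) n,
                    ← Real.rpow_mul htpos.le]
          refine lt_of_le_of_lt (setLIntegral_mono' measurableSet_Ioi hb) ?_
          rw [lintegral_mul_const' _ _ measure_ball_lt_top.ne]
          refine ENNReal.mul_lt_top ?_ measure_ball_lt_top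
          refine IntegrableOn.setLIntegral_lt_top ?_
          apply integrableOn_Ioi_rpow_of_lt _ hTpos
          rw [inv_neg, neg_mul, neg_lt_neg_iff, inv_mul_eq_div, lt_div_iff₀ hs, one_mul]
          exact hsn

lemma myIntegrable_rpow_mul (hn : 1 ≤ n) {s : ℝ} (hs : 0 < s) (hsn : s < n)
    {φ : 𝔼 → ℝ} (hφ : Continuous φ) (hφs : HasCompactSupport φ) :
    Integrable (fun x : 𝔼 => ‖x‖ ^ (-s) * |φ x|) := by
  obtain ⟨R, hR⟩ : ∃ R, tsupport φ ⊆ closedBall 0 R :=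
    hφs.isBounded.subset_closedBall 0
  obtain ⟨C, hC⟩ := hφs.exists_bound_of_continuous hφ
  rw [← integrableOn_iff_integrable_of_support_subset (s := closedBall 0 R) ?hsupp]
  case hsupp =>
    intro x hx
    by_contra hmem
    have : φ x = 0 := image_eq_zero_of_notMem_tsupport (fun h => hmem (hR h))
    simp [this] at hx
  refine Integrable.mono ((myIntegrableOn_rpow_ball hn hs hsn R).const_mul C) ?_ ?_
  · apply Measurable.aestronglyMeasurable ?_ |>.restrict
    fun_prop
  · refine Eventually.of_forall fun x => ?_
    have h0 : (0:ℝ) ≤ ‖x‖ ^ (-s) := rpow_nonneg (norm_nonneg _) _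
    have h1 : |φ x| ≤ C := by simpa using hC x
    have hC0 : 0 ≤ C := le_trans (abs_nonneg _) h1
    calc ‖(‖x‖ ^ (-s)) * |φ x|‖ = ‖x‖ ^ (-s) * |φ x| := by
          rw [Real.norm_eq_abs, abs_mul, abs_of_nonneg h0, abs_abs]
      _ ≤ ‖x‖ ^ (-s) * C := by gcongr
      _ ≤ ‖C * ‖x‖ ^ (-s)‖ := by
          rw [Real.norm_eq_abs, abs_mul, abs_of_nonneg h0, abs_of_nonneg hC0, mul_comm]

lemma myW_contDiff (p : ℝ) {c : ℝ} (hc : 0 < c) :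
    ContDiff ℝ (⊤ : ℕ∞) (fun x : 𝔼 => (‖x‖ ^ 2 + c) ^ p) := by
  rw [contDiff_iff_contDiffAt]
  intro x
  have h1 : ContDiffAt ℝ (⊤ : ℕ∞) (fun s : ℝ => s ^ p) (‖x‖ ^ 2 + c) :=
    Real.contDiffAt_rpow_const_of_ne (by positivity)
  exact h1.comp x (((contDiff_norm_sq ℝ).add contDiff_const).contDiffAt)

lemma myW_hasFDerivAt (p : ℝ) {c : ℝ} (hc : 0 < c) (x : 𝔼) :
    HasFDerivAt (fun y : 𝔼 => (‖y‖ ^ 2 + c) ^ p)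
      ((p * (‖x‖ ^ 2 + c) ^ (p - 1)) • ((2 : ℕ) • (innerSL ℝ x))) x := by
  have h1 : HasFDerivAt (fun y : 𝔼 => ‖y‖ ^ 2 + c) ((2 : ℕ) • innerSL ℝ x) x := by
    have := (hasStrictFDerivAt_norm_sq x).hasFDerivAt
    simpa using this.add_const c
  have h2 : HasDerivAt (fun s : ℝ => s ^ p) (p * (‖x‖ ^ 2 + c) ^ (p - 1)) (‖x‖ ^ 2 + c) :=
    Real.hasDerivAt_rpow_const (Or.inl (by positivity))
  exact h2.comp_hasFDerivAt x h1

lemma myW_fderiv_apply (p : ℝ) {c : ℝ} (hc : 0 < c) (x : 𝔼) (i : Fin n) :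
    fderiv ℝ (fun y : 𝔼 => (‖y‖ ^ 2 + c) ^ p) x (EuclideanSpace.single i 1)
      = 2 * p * (‖x‖ ^ 2 + c) ^ (p - 1) * x i := by
  rw [(myW_hasFDerivAt p hc x).fderiv]
  simp [EuclideanSpace.inner_single_right, real_inner_comm]
  ring


lemma myW_snd (p : ℝ) {c : ℝ} (hc : 0 < c) (x : 𝔼) (i : Fin n) :
    fderiv ℝ (fun y : 𝔼 => fderiv ℝ (fun z : 𝔼 => (‖z‖ ^ 2 + c) ^ p) y
        (EuclideanSpace.single i 1)) x (EuclideanSpace.single i 1)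
      = 4 * p * (p - 1) * (‖x‖ ^ 2 + c) ^ (p - 2) * (x i) ^ 2
        + 2 * p * (‖x‖ ^ 2 + c) ^ (p - 1) := by
  have hfun : (fun y : 𝔼 => fderiv ℝ (fun z : 𝔼 => (‖z‖ ^ 2 + c) ^ p) y
      (EuclideanSpace.single i 1))
      = fun y : 𝔼 => (2 * p) * ((‖y‖ ^ 2 + c) ^ (p - 1) * y i) :=
    funext fun y => by rw [myW_fderiv_apply p hc y i]; ring
  rw [hfun]
  have hA := myW_hasFDerivAt (p - 1) hc x
  have hB : HasFDerivAt (fun y : 𝔼 => y i) (EuclideanSpace.proj (𝕜 := ℝ) i) x :=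
    (EuclideanSpace.proj (𝕜 := ℝ) i).hasFDerivAt
  have hG := (hA.mul hB).const_mul (2 * p)
  rw [(show HasFDerivAt (fun y : 𝔼 => 2 * p * ((‖y‖ ^ 2 + c) ^ (p - 1) * y i)) _ x from hG).fderiv]
  simp [EuclideanSpace.inner_single_right, EuclideanSpace.single_apply, real_inner_comm]
  rw [show p - 1 - 1 = p - 2 by ring]
  ring

lemma myW_eLaplacian (p : ℝ) {c : ℝ} (hc : 0 < c) (x : 𝔼) :
    eLaplacian n (fun y : 𝔼 => (‖y‖ ^ 2 + c) ^ p) x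
      = 4 * p * (p - 1) * (‖x‖ ^ 2 + c) ^ (p - 2) * ‖x‖ ^ 2
        + 2 * n * p * (‖x‖ ^ 2 + c) ^ (p - 1) := by
  have hsum : ∑ i : Fin n, (x i) ^ 2 = ‖x‖ ^ 2 := by
    rw [EuclideanSpace.norm_eq, Real.sq_sqrt (by positivity)]
    simp [sq_abs]
  rw [eLaplacian]
  simp only [myW_snd p hc x]
  rw [Finset.sum_add_distrib, Finset.sum_const, Finset.card_univ, Fintype.card_fin,
    ← Finset.mul_sum, hsum, nsmul_eq_mul]
  ring

lemma rpow_normsq (x : 𝔼) (r : ℝ) : ((‖x‖ ^ 2 : ℝ)) ^ r = ‖x‖ ^ (2 * r) := by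
  rw [← Real.rpow_natCast ‖x‖ 2, ← Real.rpow_mul (norm_nonneg x)]
  norm_num


end RellichAux

/-- **Weighted Green identity with the singular weight** `‖x‖^{−(β+2)}` (the vanishing of
`G^β` in the Euclidean case): for `−2 < β < n−4` and every smooth compactly supported `u`,
`∫ ‖x‖^{−(β+2)} Δ(u²) = (β+2)(β+4−n) ∫ u² ‖x‖^{−(β+4)}`. -/
theorem stmt_12 (n : ℕ) (hn : 1 ≤ n) (β : ℝ) (hβ1 : -2 < β) (hβ2 : β < (n : ℝ) - 4)
    (u : EuclideanSpace ℝ (Fin n) → ℝ)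
    (hu : ContDiff ℝ (⊤ : ℕ∞) u) (husupp : HasCompactSupport u) :
    ∫ x, ‖x‖ ^ (-(β + 2)) * eLaplacian n (fun y => (u y) ^ 2) x =
      (β + 2) * (β + 4 - (n : ℝ)) * ∫ x, (u x) ^ 2 * ‖x‖ ^ (-(β + 4)) := by
  haveI : Nonempty (Fin n) := ⟨⟨0, hn⟩⟩
  have hβ2' : β + 4 < (n : ℝ) := by linarith
  have hβ4 : (0:ℝ) < β + 4 := by linarith
  have hβ2pos : (0:ℝ) < β + 2 := by linarith
  set p : ℝ := -(β + 2) / 2 with hp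
  set v : EuclideanSpace ℝ (Fin n) → ℝ := fun y => (u y) ^ 2 with hvdef
  have hv : ContDiff ℝ (⊤ : ℕ∞) v := hu.pow 2
  have hvs : HasCompactSupport v :=
    husupp.comp_left (g := fun t : ℝ => t ^ 2) (by simp)
  -- continuity and compact support of the Laplacian of v
  have hΔc : Continuous (eLaplacian n v) := by
    show Continuous fun x => ∑ i : Fin n, _
    exact continuous_finset_sum _ fun i _ =>
      (myContDiff_dcoord (myContDiff_dcoord hv _) _).continuous
  have hΔs : HasCompactSupport (eLaplacian n v) := by
    have hsub : Function.support (eLaplacian n v) ⊆ tsupport v := by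
      apply Function.support_subset_iff'.2
      intro x hx
      have : ∀ i : Fin n, fderiv ℝ
          (fun y => fderiv ℝ v y (EuclideanSpace.single i 1)) x (EuclideanSpace.single i 1)
            = 0 := by
        intro i
        have h1 : tsupport (fun y => fderiv ℝ v y (EuclideanSpace.single i 1))
            ⊆ tsupport v := by
          apply closure_minimal ?_ (isClosed_tsupport v)
          intro y hy
          have h5 : fderiv ℝ v y ≠ 0 := by
            intro h
            exact hy (show fderiv ℝ v y (EuclideanSpace.single i 1) = 0 by rw [h]; rfl)
          exact support_fderiv_subset (𝕜 := ℝ) (f := v) h5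
        have h2 : x ∉ tsupport (fun y => fderiv ℝ v y (EuclideanSpace.single i 1)) :=
          fun h => hx (h1 h)
        have h3 := support_fderiv_subset (𝕜 := ℝ)
          (f := fun y => fderiv ℝ v y (EuclideanSpace.single i 1))
        have h4 : fderiv ℝ (fun y => fderiv ℝ v y (EuclideanSpace.single i 1)) x = 0 := by
          by_contra h
          exact h2 (h3 (by simpa [Function.mem_support] using h))
        rw [h4]; rfl
      simp [eLaplacian, this]
    exact HasCompactSupport.of_support_subset_isCompact hvs hsub
  -- the identity for smoothed weights
  have key : ∀ ε : ℝ, ε ∈ Ioi (0:ℝ) →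
      (∫ x : EuclideanSpace ℝ (Fin n), (‖x‖ ^ 2 + ε ^ 2) ^ p * eLaplacian n v x)
        = ∫ x : EuclideanSpace ℝ (Fin n), (4 * p * (p - 1) * (‖x‖ ^ 2 + ε ^ 2) ^ (p - 2) * ‖x‖ ^ 2
            + 2 * n * p * (‖x‖ ^ 2 + ε ^ 2) ^ (p - 1)) * v x := by
    intro ε hε
    have hε0 : (0:ℝ) < ε := hε
    have hc : (0:ℝ) < ε ^ 2 := by positivity
    rw [myGreen (myW_contDiff p hc) hv hvs]
    refine integral_congr_ae (Eventually.of_forall fun x => ?_)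
    simp only
    rw [myW_eLaplacian p hc x]
  have h2p : 2 * p = -(β + 2) := by rw [hp]; ring
  have h2p1 : 2 * (p - 1) = -(β + 4) := by rw [hp]; ring
  have h0 : ∀ᵐ x : EuclideanSpace ℝ (Fin n), x ≠ (0 : EuclideanSpace ℝ (Fin n)) := by
    have hz : volume ({(0 : EuclideanSpace ℝ (Fin n))} : Set (EuclideanSpace ℝ (Fin n))) = 0 :=
      measure_singleton 0
    exact eventually_of_mem (compl_mem_ae_iff.2 hz) fun x hx => by simpa using hx
  have tendA : Tendsto (fun ε : ℝ => ∫ x : EuclideanSpace ℝ (Fin n), (‖x‖ ^ 2 + ε ^ 2) ^ p * eLaplacian n v x)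
      (𝓝[>] 0) (𝓝 (∫ x : EuclideanSpace ℝ (Fin n), ‖x‖ ^ (-(β + 2)) * eLaplacian n v x)) := by
    refine tendsto_integral_filter_of_dominated_convergence
      (fun x => ‖x‖ ^ (-(β + 2)) * |eLaplacian n v x|) ?_ ?_ ?_ ?_
    · filter_upwards [self_mem_nhdsWithin] with ε hε
      have hε0 : (0:ℝ) < ε := hε
      have hc : (0:ℝ) < ε ^ 2 := by positivity
      exact ((myW_contDiff p hc).continuous.mul hΔc).aestronglyMeasurable
    · filter_upwards [self_mem_nhdsWithin] with ε hε
      have hε0 : (0:ℝ) < ε := hε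
      filter_upwards [h0] with x hx
      have hq : (0:ℝ) < ‖x‖ ^ 2 := pow_pos (norm_pos_iff.2 hx) 2
      have hle : ((‖x‖ : ℝ) ^ 2 + ε ^ 2) ^ p ≤ ((‖x‖ : ℝ) ^ 2) ^ p :=
        Real.rpow_le_rpow_of_nonpos hq (le_add_of_nonneg_right (by positivity))
          (by rw [hp]; linarith)
      calc ‖(‖x‖ ^ 2 + ε ^ 2) ^ p * eLaplacian n v x‖
          = (‖x‖ ^ 2 + ε ^ 2) ^ p * |eLaplacian n v x| := by
            rw [Real.norm_eq_abs, abs_mul, abs_of_nonneg (rpow_nonneg (by positivity) _)]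
        _ ≤ ((‖x‖ : ℝ) ^ 2) ^ p * |eLaplacian n v x| :=
            mul_le_mul_of_nonneg_right hle (abs_nonneg _)
        _ = ‖x‖ ^ (-(β + 2)) * |eLaplacian n v x| := by rw [rpow_normsq, h2p]
    · exact myIntegrable_rpow_mul hn hβ2pos (by linarith) hΔc hΔs
    · filter_upwards [h0] with x hx
      have hq : ((‖x‖ : ℝ) ^ 2) ≠ 0 := (pow_pos (norm_pos_iff.2 hx) 2).ne'
      have t1 : Tendsto (fun ε : ℝ => ‖x‖ ^ 2 + ε ^ 2) (𝓝[>] (0:ℝ)) (𝓝 (‖x‖ ^ 2)) := by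
        have hcont : Continuous fun ε : ℝ => ‖x‖ ^ 2 + ε ^ 2 :=
          continuous_const.add (continuous_id.pow 2)
        have h2 := hcont.tendsto 0
        norm_num at h2
        exact h2.mono_left nhdsWithin_le_nhds
      have t2 := ((Real.continuousAt_rpow_const _ p (Or.inl hq)).tendsto.comp t1).mul_const
        (eLaplacian n v x)
      have heq : ‖x‖ ^ (-(β + 2)) * eLaplacian n v x
          = ((‖x‖ : ℝ) ^ 2) ^ p * eLaplacian n v x := by rw [rpow_normsq, h2p]
      rw [heq]
      exact t2
  have tendB : Tendsto (fun ε : ℝ => ∫ x : EuclideanSpace ℝ (Fin n),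
        (4 * p * (p - 1) * (‖x‖ ^ 2 + ε ^ 2) ^ (p - 2) * ‖x‖ ^ 2
          + 2 * n * p * (‖x‖ ^ 2 + ε ^ 2) ^ (p - 1)) * v x)
      (𝓝[>] 0)
      (𝓝 (∫ x : EuclideanSpace ℝ (Fin n), ((β + 2) * (β + 4 - (n : ℝ))) * (v x * ‖x‖ ^ (-(β + 4))))) := by
    have hcoef : 4 * p * (p - 1) + 2 * (n : ℝ) * p = (β + 2) * (β + 4 - (n : ℝ)) := by
      rw [hp]; ring
    set C : ℝ := |4 * p * (p - 1)| + 2 * n * |p| with hC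
    refine tendsto_integral_filter_of_dominated_convergence
      (fun x => C * (‖x‖ ^ (-(β + 4)) * |v x|)) ?_ ?_ ?_ ?_
    · filter_upwards [self_mem_nhdsWithin] with ε hε
      have hε0 : (0:ℝ) < ε := hε
      have hc : (0:ℝ) < ε ^ 2 := by positivity
      have hW2 := (myW_contDiff (n := n) (p - 2) hc).continuous
      have hW1 := (myW_contDiff (n := n) (p - 1) hc).continuous
      exact ((((continuous_const.mul hW2).mul (continuous_norm.pow 2)).add
        (continuous_const.mul hW1)).mul hv.continuous).aestronglyMeasurable
    · filter_upwards [self_mem_nhdsWithin] with ε hε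
      have hε0 : (0:ℝ) < ε := hε
      filter_upwards [h0] with x hx
      have hq : (0:ℝ) < ‖x‖ ^ 2 := pow_pos (norm_pos_iff.2 hx) 2
      have hxe : ((‖x‖:ℝ) ^ 2) ≤ ‖x‖ ^ 2 + ε ^ 2 := le_add_of_nonneg_right (by positivity)
      have hle2 : ((‖x‖:ℝ) ^ 2 + ε ^ 2) ^ (p - 2) ≤ ((‖x‖:ℝ) ^ 2) ^ (p - 2) :=
        Real.rpow_le_rpow_of_nonpos hq hxe (by rw [hp]; linarith)
      have hle1 : ((‖x‖:ℝ) ^ 2 + ε ^ 2) ^ (p - 1) ≤ ((‖x‖:ℝ) ^ 2) ^ (p - 1) :=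
        Real.rpow_le_rpow_of_nonpos hq hxe (by rw [hp]; linarith)
      have e2 : ((‖x‖:ℝ) ^ 2) ^ (p - 2) * ‖x‖ ^ 2 = ‖x‖ ^ (-(β + 4)) := by
        have hnx : (0:ℝ) < ‖x‖ := norm_pos_iff.2 hx
        rw [rpow_normsq, ← Real.rpow_natCast ‖x‖ 2, ← Real.rpow_add hnx]
        congr 1
        push_cast
        rw [hp]; ring
      have e1 : ((‖x‖:ℝ) ^ 2) ^ (p - 1) = ‖x‖ ^ (-(β + 4)) := by
        rw [rpow_normsq, h2p1]
      have hA : |4 * p * (p - 1) * (‖x‖ ^ 2 + ε ^ 2) ^ (p - 2) * ‖x‖ ^ 2|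
          ≤ |4 * p * (p - 1)| * ‖x‖ ^ (-(β + 4)) := by
        rw [show 4 * p * (p - 1) * (‖x‖ ^ 2 + ε ^ 2) ^ (p - 2) * ‖x‖ ^ 2
            = (4 * p * (p - 1)) * ((‖x‖ ^ 2 + ε ^ 2) ^ (p - 2) * ‖x‖ ^ 2) by ring,
          abs_mul, abs_of_nonneg (mul_nonneg (rpow_nonneg (by positivity) _) hq.le)]
        rw [← e2]
        exact mul_le_mul_of_nonneg_left (mul_le_mul_of_nonneg_right hle2 hq.le) (abs_nonneg _)
      have hB : |2 * (n:ℝ) * p * (‖x‖ ^ 2 + ε ^ 2) ^ (p - 1)|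
          ≤ 2 * (n:ℝ) * |p| * ‖x‖ ^ (-(β + 4)) := by
        have habs : |2 * (n:ℝ) * p * (‖x‖ ^ 2 + ε ^ 2) ^ (p - 1)|
            = 2 * (n:ℝ) * |p| * (‖x‖ ^ 2 + ε ^ 2) ^ (p - 1) := by
          rw [abs_mul, abs_mul, abs_of_nonneg (rpow_nonneg (by positivity) _),
            abs_of_nonneg (by positivity : (0:ℝ) ≤ 2 * (n:ℝ))]
        rw [habs, ← e1]
        exact mul_le_mul_of_nonneg_left hle1 (by positivity)
      calc ‖(4 * p * (p - 1) * (‖x‖ ^ 2 + ε ^ 2) ^ (p - 2) * ‖x‖ ^ 2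
            + 2 * (n:ℝ) * p * (‖x‖ ^ 2 + ε ^ 2) ^ (p - 1)) * v x‖
          = |4 * p * (p - 1) * (‖x‖ ^ 2 + ε ^ 2) ^ (p - 2) * ‖x‖ ^ 2
            + 2 * (n:ℝ) * p * (‖x‖ ^ 2 + ε ^ 2) ^ (p - 1)| * |v x| := by
            rw [Real.norm_eq_abs, abs_mul]
        _ ≤ (|4 * p * (p - 1) * (‖x‖ ^ 2 + ε ^ 2) ^ (p - 2) * ‖x‖ ^ 2|
            + |2 * (n:ℝ) * p * (‖x‖ ^ 2 + ε ^ 2) ^ (p - 1)|) * |v x| :=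
            mul_le_mul_of_nonneg_right (abs_add_le _ _) (abs_nonneg _)
        _ ≤ ((|4 * p * (p - 1)| + 2 * (n:ℝ) * |p|) * ‖x‖ ^ (-(β + 4))) * |v x| := by
            refine mul_le_mul_of_nonneg_right ?_ (abs_nonneg _)
            rw [add_mul]
            exact add_le_add hA hB
        _ = C * (‖x‖ ^ (-(β + 4)) * |v x|) := by rw [hC]; ring
    · exact (myIntegrable_rpow_mul hn hβ4 hβ2' hv.continuous hvs).const_mul C
    · filter_upwards [h0] with x hx
      have hq0 : ((‖x‖:ℝ) ^ 2) ≠ 0 := (pow_pos (norm_pos_iff.2 hx) 2).ne'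
      have hq : (0:ℝ) < ‖x‖ ^ 2 := pow_pos (norm_pos_iff.2 hx) 2
      have t1 : Tendsto (fun ε : ℝ => ‖x‖ ^ 2 + ε ^ 2) (𝓝[>] (0:ℝ)) (𝓝 (‖x‖ ^ 2)) := by
        have hcont : Continuous fun ε : ℝ => ‖x‖ ^ 2 + ε ^ 2 :=
          continuous_const.add (continuous_id.pow 2)
        have h2 := hcont.tendsto 0
        norm_num at h2
        exact h2.mono_left nhdsWithin_le_nhds
      have t2 := (Real.continuousAt_rpow_const _ (p - 2) (Or.inl hq0)).tendsto.comp t1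
      have t1' := (Real.continuousAt_rpow_const _ (p - 1) (Or.inl hq0)).tendsto.comp t1
      have tB := (((t2.const_mul (4 * p * (p - 1))).mul_const ((‖x‖:ℝ) ^ 2)).add
        (t1'.const_mul (2 * (n:ℝ) * p))).mul_const (v x)
      have heq : ((β + 2) * (β + 4 - (n : ℝ))) * (v x * ‖x‖ ^ (-(β + 4)))
          = (4 * p * (p - 1) * ((‖x‖:ℝ) ^ 2) ^ (p - 2) * ‖x‖ ^ 2
            + 2 * (n:ℝ) * p * ((‖x‖:ℝ) ^ 2) ^ (p - 1)) * v x := by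
        have e2 : ((‖x‖:ℝ) ^ 2) ^ (p - 2) * ‖x‖ ^ 2 = ‖x‖ ^ (-(β + 4)) := by
          have hnx : (0:ℝ) < ‖x‖ := norm_pos_iff.2 hx
          rw [rpow_normsq, ← Real.rpow_natCast ‖x‖ 2, ← Real.rpow_add hnx]
          congr 1
          push_cast
          rw [hp]; ring
        have e1 : ((‖x‖:ℝ) ^ 2) ^ (p - 1) = ‖x‖ ^ (-(β + 4)) := by
          rw [rpow_normsq, h2p1]
        rw [show 4 * p * (p - 1) * ((‖x‖:ℝ) ^ 2) ^ (p - 2) * ‖x‖ ^ 2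
            = (4 * p * (p - 1)) * (((‖x‖:ℝ) ^ 2) ^ (p - 2) * ‖x‖ ^ 2) by ring, e2, e1,
          ← hcoef]
        ring
      rw [heq]
      exact tB.congr fun ε => rfl
  have tendA' : Tendsto (fun ε : ℝ => ∫ x : EuclideanSpace ℝ (Fin n), (‖x‖ ^ 2 + ε ^ 2) ^ p * eLaplacian n v x)
      (𝓝[>] 0) (𝓝 (∫ x : EuclideanSpace ℝ (Fin n), ((β + 2) * (β + 4 - (n : ℝ))) * (v x * ‖x‖ ^ (-(β + 4))))) := by
    refine tendB.congr' ?_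
    filter_upwards [self_mem_nhdsWithin] with ε hε
    exact (key ε hε).symm
  have := tendsto_nhds_unique tendA tendA'
  rw [this, integral_const_mul]
end
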